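/- arXiv:math/0209239 — 11 statements merged into one kernel-verified Lean document; each statement's English description precedes it below -/
import Mathlib

section
/- Let K[A,B] be a polynomial ring over a field K of characteristic p > 0, and suppose q = p^e satisfies q ≡ 1 mod n for some n ≥ 3, say q = nk+1 with k ≥ 1. Then every monomial of degree (2n-3)k in A and B lies in the ideal I = (A^{(n-1)k}, B^{(n-1)k}, (A+B)^{(n-1)k}); that is, (A,B)^{(2n-3)k} ⊆ I. -/
/-!
Put `r = (n - 2) k`, so that `q = r + 2k + 1`, `(n - 1) k = r + k` and `(2n - 3) k = 2r + k`.
Modulo `(A^(r+k), B^(r+k))` only the `k - 1` middle monomials `A^(r+1+u) B^(r+k-1-u)`,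
`u < k - 1`, survive in degree `2r + k`, and the multiple `A^(r-k+d) (A+B)^(q-1-d)` of
`(A+B)^(r+k)` (`d < k - 1`) reduces to their combination with coefficients
`C(q-1-d, k-d+1+u)`. Since `(1 + X)^q = 1 + X^q` in characteristic `p`, these coefficients are
`±C(k+1+u, d)`, and the matrix `(C(a+u, d))_{d,u}` has determinant `1`, so the middle monomials are
combinations of the multiples of `(A+B)^(r+k)`.
-/

open Finset Matrix

section Binomial

variable {R : Type*} [CommRing R] {p : ℕ} (hp : (p : R) = 0) (hpp : p.Prime) {e : ℕ}
include hp hpp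

theorem cast_choose_prime_pow_sub_one {j : ℕ} (hj : j < p ^ e) :
    ((p ^ e - 1).choose j : R) = (-1) ^ j := by
  induction j with
  | zero => simp
  | succ j ih =>
    have hpascal := Nat.choose_succ_succ' (p ^ e - 1) j
    rw [Nat.sub_add_cancel (by omega)] at hpascal
    obtain ⟨t, ht⟩ := hpp.dvd_choose_pow (Nat.succ_ne_zero j) hj.ne
    have hzero : ((p ^ e).choose (j + 1) : R) = 0 := by rw [ht, Nat.cast_mul, hp, zero_mul]
    rw [hpascal, Nat.cast_add, ih (by omega)] at hzero
    linear_combination hzero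

theorem cast_choose_eq_neg_one_pow_mul_choose {c d i : ℕ} (hcd : c + d + 1 = p ^ e)
    (hi : i ≤ c) : (c.choose i : R) = (-1) ^ i * ((d + i).choose d : R) := by
  induction d generalizing c i with
  | zero =>
    obtain rfl : c = p ^ e - 1 := by omega
    simp [cast_choose_prime_pow_sub_one hp hpp (by omega : i < p ^ e)]
  | succ d ihd =>
    induction i with
    | zero => simp
    | succ i ihi =>
      have hc := ihd (c := c + 1) (i := i + 1) (by omega) (by omega)
      rw [Nat.choose_succ_succ', Nat.cast_add, ihi (by omega),
        show d + (i + 1) = d + 1 + i by omega] at hc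
      rw [show d + 1 + (i + 1) = d + 1 + i + 1 by omega, Nat.choose_succ_succ', Nat.cast_add]
      linear_combination hc

end Binomial

theorem Matrix.det_choose_add {R : Type*} [CommRing R] (a n : ℕ) :
    (of fun d u : Fin n => ((a + u).choose d : R)).det = 1 := by
  induction a with
  | zero =>
    rw [det_of_isUpperTriangular]
    · simp
    · intro i j hij
      simp [Nat.choose_eq_zero_of_lt (show (j : ℕ) < i from hij)]
  | succ a ih =>
    rw [← ih]
    cases n with
    | zero => simp
    | succ n =>
      -- Pascal's rule: row `d + 1` for `a` is row `d + 1` for `a + 1` minus row `d` for `a`.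
      refine (det_eq_of_forall_row_eq_smul_add_pred (fun _ => -1) (fun j => by simp)
        fun i j => ?_).symm
      simp only [of_apply, Fin.val_succ, Fin.val_castSucc]
      rw [show a + 1 + (j : ℕ) = a + j + 1 by ring, Nat.choose_succ_succ]
      push_cast
      ring

theorem isUnit_choose_matrix {R : Type*} [CommRing R] {p e r k : ℕ} (hp : (p : R) = 0)
    (hpp : p.Prime) (hq : p ^ e = r + 2 * k + 1) :
    IsUnit (of fun d u : Fin (k - 1) => ((r + 2 * k - d).choose (k - d + 1 + u) : R)) := by
  have hentry : ∀ d u : Fin (k - 1), ((r + 2 * k - d).choose (k - d + 1 + u) : R) =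
      (-1) ^ (d : ℕ) * ((-1) ^ (k + 1 + (u : ℕ)) * ((k + 1 + u).choose d : R)) := by
    intro d u
    have hd := d.isLt
    rw [cast_choose_eq_neg_one_pow_mul_choose hp hpp (e := e) (d := d) (by omega) (by omega),
      show (d : ℕ) + (k - d + 1 + u) = k + 1 + u by omega, ← mul_assoc, ← pow_add,
      show (d : ℕ) + (k + 1 + u) = k - d + 1 + u + 2 * d by omega, pow_add _ _ (2 * _),
      pow_mul, neg_one_sq, one_pow, mul_one]
  have hfactor : (of fun d u : Fin (k - 1) => ((r + 2 * k - d).choose (k - d + 1 + u) : R)) =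
      diagonal (fun d : Fin (k - 1) => (-1 : R) ^ (d : ℕ)) *
        of (fun d u : Fin (k - 1) => ((k + 1 + u).choose d : R)) *
        diagonal (fun u : Fin (k - 1) => (-1 : R) ^ (k + 1 + (u : ℕ))) := by
    ext d u
    simp only [mul_diagonal, diagonal_mul, of_apply, hentry]
    ring
  have hsign : ∀ N : ℕ, IsUnit ((-1 : R) ^ N) := fun N => isUnit_neg_one.pow N
  rw [hfactor]
  exact ((isUnit_diagonal.2 (Pi.isUnit_iff.2 fun _ => hsign _)).mul
    ((isUnit_iff_isUnit_det _).2 (by rw [det_choose_add]; exact isUnit_one))).mul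
    (isUnit_diagonal.2 (Pi.isUnit_iff.2 fun _ => hsign _))

theorem pow_mul_add_pow_eq_sum_Ico {S : Type*} [CommSemiring S] {a b : S} {m x z lo hi : ℕ}
    (ha : a ^ m = 0) (hb : b ^ m = 0) (hlo : m + lo ≤ z + 1) (hhi : m ≤ x + hi)
    (hiz : hi ≤ z + 1) :
    a ^ x * (a + b) ^ z = ∑ i ∈ Ico lo hi, (z.choose i : S) * (a ^ (x + i) * b ^ (z - i)) := by
  rw [add_pow, mul_sum]
  symm
  refine sum_subset_zero_on_sdiff (fun i hi => by simp only [mem_Ico, mem_range] at hi ⊢; omega)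
    (fun i hi => ?_) (fun i _ => by rw [pow_add]; ring)
  simp only [mem_sdiff, mem_Ico, mem_range, not_and_or, not_le, not_lt] at hi
  rcases hi with ⟨-, hi | hi⟩
  · rw [pow_eq_zero_of_le (by omega) hb]; ring
  · rw [← mul_assoc, ← mul_assoc, ← pow_add, pow_eq_zero_of_le (by omega) ha]; ring

theorem Ideal.mem_of_mulVec_mem {n S : Type*} [Fintype n] [DecidableEq n] [CommRing S]
    {I : Ideal S} {T : Matrix n n S} (hT : IsUnit T) {v : n → S}
    (h : ∀ i, (T *ᵥ v) i ∈ I) (j : n) : v j ∈ I := by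
  rw [← one_mulVec v, ← nonsing_inv_mul T ((isUnit_iff_isUnit_det T).1 hT), ← mulVec_mulVec]
  exact I.sum_mem fun i _ => I.mul_mem_left _ (h i)

theorem Ideal.span_pair_pow_le {R : Type*} [CommRing R] {A B : R} {D : ℕ} {J : Ideal R}
    (h : ∀ i j, i + j = D → A ^ i * B ^ j ∈ J) : Ideal.span {A, B} ^ D ≤ J := by
  rw [Ideal.span_insert, ← Ideal.add_eq_sup, add_pow, Ideal.sum_eq_sup]
  refine Finset.sup_le fun i hi => ?_
  rw [Ideal.span_singleton_pow, Ideal.span_singleton_pow, Ideal.span_singleton_mul_span_singleton]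
  exact Ideal.mul_le_left.trans
    ((Ideal.span_singleton_le_iff_mem _).2 (h _ _ (by simp at hi; omega)))

-- `(p : S) = 0` rather than `CharP S p`, so that this applies to quotient rings.
theorem pow_mul_pow_mem_span_add_pow {S : Type*} [CommRing S] {p e r k i j : ℕ} {a b : S}
    (hp : (p : S) = 0) (hpp : p.Prime) (hkr : k ≤ r) (hq : p ^ e = r + 2 * k + 1)
    (ha : a ^ (r + k) = 0) (hb : b ^ (r + k) = 0) (hij : i + j = 2 * r + k) :
    a ^ i * b ^ j ∈ Ideal.span {(a + b) ^ (r + k)} := by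
  by_cases hi : r + k ≤ i
  · simp [pow_eq_zero_of_le hi ha]
  by_cases hj : r + k ≤ j
  · simp [pow_eq_zero_of_le hj hb]
  set T : Matrix (Fin (k - 1)) (Fin (k - 1)) S :=
    of fun d u => ((r + 2 * k - d).choose (k - d + 1 + u) : S)
  set mon : Fin (k - 1) → S := fun u => a ^ (r + 1 + u) * b ^ (r + k - 1 - u)
  have hwitness : ∀ d, (T *ᵥ mon) d = a ^ (r - k + d) * (a + b) ^ ((k - d) + (r + k)) := by
    intro d
    have hd := d.isLt
    rw [show k - d + (r + k) = r + 2 * k - d by omega,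
      pow_mul_add_pow_eq_sum_Ico ha hb (lo := k - d + 1) (hi := 2 * k - d) (by omega) (by omega)
        (by omega), sum_Ico_eq_sum_range, show 2 * k - d - (k - d + 1) = k - 1 by omega,
      ← Fin.sum_univ_eq_sum_range (fun i => ((r + 2 * k - d).choose (k - d + 1 + i) : S) *
        (a ^ (r - k + d + (k - d + 1 + i)) * b ^ (r + 2 * k - d - (k - d + 1 + i))))]
    simp only [mulVec, dotProduct, T, mon, of_apply]
    refine sum_congr rfl fun u _ => ?_
    have hu := u.isLt
    rw [show r - k + d + (k - d + 1 + u) = r + 1 + u by omega,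
      show r + 2 * k - d - (k - d + 1 + u) = r + k - 1 - u by omega]
  obtain ⟨u, rfl⟩ : ∃ u, i = r + 1 + u := ⟨i - (r + 1), by omega⟩
  obtain rfl : j = r + k - 1 - u := by omega
  refine Ideal.mem_of_mulVec_mem (v := mon) (isUnit_choose_matrix hp hpp hq) (fun d => ?_)
    ⟨u, by omega⟩
  rw [hwitness, pow_add (a + b) (k - d)]
  exact Ideal.mul_mem_left _ _ (Ideal.mul_mem_left _ _ (Ideal.mem_span_singleton_self _))

theorem span_pair_pow_le_span_pow_pow_add_pow {R : Type*} [CommRing R] {p e r k : ℕ}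
    (hp : (p : R) = 0) (hpp : p.Prime) (hkr : k ≤ r) (hq : p ^ e = r + 2 * k + 1) (A B : R) :
    Ideal.span {A, B} ^ (2 * r + k) ≤
      Ideal.span {A ^ (r + k), B ^ (r + k), (A + B) ^ (r + k)} := by
  set P := Ideal.span {A ^ (r + k), B ^ (r + k)}
  have hpow_zero : ∀ x ∈ ({A ^ (r + k), B ^ (r + k)} : Set R), Ideal.Quotient.mk P x = 0 :=
    fun x hx => Ideal.Quotient.eq_zero_iff_mem.2 (Ideal.subset_span hx)
  refine Ideal.span_pair_pow_le fun i j hij => ?_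
  have hmem := pow_mul_pow_mem_span_add_pow (a := Ideal.Quotient.mk P A)
    (b := Ideal.Quotient.mk P B) (by rw [← map_natCast (Ideal.Quotient.mk P), hp, map_zero])
    hpp hkr hq (by rw [← map_pow]; exact hpow_zero _ (by simp))
    (by rw [← map_pow]; exact hpow_zero _ (by simp)) hij
  rw [← map_pow, ← map_pow, ← map_mul, ← map_add, ← map_pow, ← Set.image_singleton,
    ← Ideal.map_span, Ideal.mem_quotient_iff_mem_sup] at hmem
  refine (show Ideal.span {(A + B) ^ (r + k)} ⊔ P ≤ _ from sup_le ?_ ?_) hmem <;>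
    exact Ideal.span_mono (by simp [Set.insert_subset_iff])

open MvPolynomial

theorem stmt_1_general (K : Type*) [Field K] (p n e k : ℕ) [Fact p.Prime] [CharP K p]
    (hn : 3 ≤ n) (hq : p ^ e = n * k + 1)
    (A B : MvPolynomial (Fin 2) K) :
    (Ideal.span {A, B}) ^ ((2 * n - 3) * k) ≤
      Ideal.span {A ^ ((n - 1) * k), B ^ ((n - 1) * k), (A + B) ^ ((n - 1) * k)} := by
  obtain ⟨c, rfl⟩ : ∃ c, n = c + 3 := ⟨n - 3, by omega⟩
  have hdeg : (2 * (c + 3) - 3) * k = 2 * ((c + 1) * k) + k := by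
    rw [show 2 * (c + 3) - 3 = 2 * c + 3 by omega]; ring
  have hgen : (c + 3 - 1) * k = (c + 1) * k + k := by
    rw [show c + 3 - 1 = c + 2 by omega]; ring
  rw [hdeg, hgen]
  exact span_pair_pow_le_span_pow_pow_add_pow (CharP.cast_eq_zero _ p) Fact.out
    (Nat.le_mul_of_pos_left k (by omega : 0 < c + 1)) (by rw [hq]; ring) A B

theorem stmt_1 (K : Type*) [Field K] (p n e k : ℕ) [Fact p.Prime] [CharP K p]
    (hn : 3 ≤ n) (he : 1 ≤ e) (hk : 1 ≤ k) (hq : p ^ e = n * k + 1)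
    (A B : MvPolynomial (Fin 2) K) (hA : A = X 0) (hB : B = X 1) :
    (Ideal.span {A, B}) ^ ((2 * n - 3) * k) ≤
      Ideal.span {A ^ ((n - 1) * k), B ^ ((n - 1) * k), (A + B) ^ ((n - 1) * k)} :=
  stmt_1_general K p n e k hn hq A B
end

section
/- Let K[A,B] be a polynomial ring over a field K of characteristic p > 0 with q = p^e = nk+1 for n ≥ 3, k ≥ 1. Then (AB)^{(n-2)k}(A+B)^k lies in the ideal (A^{(n-1)k}, B^{(n-1)k}, (A+B)^{(n-1)k}). -/
open MvPolynomial Finset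

namespace Stmt2Aux

variable {K : Type*} [Field K]

noncomputable def mono (u v : ℕ) (c : K) : MvPolynomial (Fin 2) K :=
  monomial (Finsupp.single 0 u + Finsupp.single 1 v) c

@[simp] lemma expo_apply0 (u v : ℕ) :
    ((Finsupp.single (0 : Fin 2) u + Finsupp.single 1 v : Fin 2 →₀ ℕ)) 0 = u := by
  rw [Finsupp.add_apply]
  simp [Finsupp.single_apply]

@[simp] lemma expo_apply1 (u v : ℕ) :
    ((Finsupp.single (0 : Fin 2) u + Finsupp.single 1 v : Fin 2 →₀ ℕ)) 1 = v := by
  rw [Finsupp.add_apply]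
  simp [Finsupp.single_apply]

lemma expo_inj {u v u' v' : ℕ}
    (h : Finsupp.single (0 : Fin 2) u + Finsupp.single 1 v
       = Finsupp.single (0 : Fin 2) u' + Finsupp.single 1 v') : u = u' ∧ v = v' := by
  constructor
  · have := DFunLike.congr_fun h 0
    rwa [expo_apply0, expo_apply0] at this
  · have := DFunLike.congr_fun h 1
    rwa [expo_apply1, expo_apply1] at this

lemma mono_mul (u v u' v' : ℕ) (c c' : K) :
    mono u v c * mono u' v' c' = mono (u + u') (v + v') (c * c') := by
  have he : (Finsupp.single (0 : Fin 2) u + Finsupp.single 1 v)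
        + (Finsupp.single (0 : Fin 2) u' + Finsupp.single 1 v')
      = Finsupp.single (0 : Fin 2) (u + u') + Finsupp.single 1 (v + v') := by
    rw [Finsupp.single_add, Finsupp.single_add]
    exact add_add_add_comm _ _ _ _
  unfold mono
  rw [monomial_mul, he]

lemma X_pow_mul_X_pow (u v : ℕ) :
    (X 0 ^ u * X 1 ^ v : MvPolynomial (Fin 2) K) = mono u v 1 := by
  rw [X_pow_eq_monomial, X_pow_eq_monomial, monomial_mul, mul_one]
  rfl

lemma mono_eq_C_mul (u v : ℕ) (c : K) :
    mono u v c = C c * (X 0 ^ u * X 1 ^ v) := by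
  rw [X_pow_mul_X_pow]
  unfold mono
  rw [C_mul_monomial, mul_one]

@[simp] lemma mono_zero (u v : ℕ) : (mono u v 0 : MvPolynomial (Fin 2) K) = 0 := by
  unfold mono; exact map_zero _

lemma deg2 (μ : Fin 2 →₀ ℕ) : μ.degree = μ 0 + μ 1 := by
  rw [Finsupp.degree_apply]
  rw [Finset.sum_subset (Finset.subset_univ μ.support)
    (by intro x _ hx; simpa [Finsupp.notMem_support_iff] using hx)]
  exact Fin.sum_univ_two _

lemma mono_isHomogeneous {u v N : ℕ} (h : u + v = N) (c : K) :
    (mono u v c : MvPolynomial (Fin 2) K).IsHomogeneous N := by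
  apply isHomogeneous_monomial
  rw [deg2]
  simpa using h

lemma coeff_mono (a b u v : ℕ) (c : K) :
    coeff (Finsupp.single (0 : Fin 2) a + Finsupp.single 1 b) (mono u v c)
      = if u = a ∧ v = b then c else 0 := by
  unfold mono
  rw [coeff_monomial]
  by_cases h : u = a ∧ v = b
  · obtain ⟨rfl, rfl⟩ := h
    simp
  · rw [if_neg h, if_neg]
    intro he
    exact h (expo_inj he)

lemma aeval_mono (f : Fin 2 → MvPolynomial (Fin 2) K) (u v : ℕ) (c : K) :
    aeval f (mono u v c) = C c * (f 0 ^ u * f 1 ^ v) := by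
  unfold mono
  rw [aeval_monomial]
  have : (Finsupp.single (0 : Fin 2) u + Finsupp.single 1 v).prod (fun i e => f i ^ e)
      = f 0 ^ u * f 1 ^ v := by
    rw [Finsupp.prod_fintype]
    · rw [Fin.prod_univ_two, expo_apply0, expo_apply1]
    · intro i; exact pow_zero _
  rw [this, algebraMap_eq]
/-- Expansion of a homogeneous "coefficient row" times a power of `X 0 + X 1`. -/
lemma group (cf : ℕ → K) (dd mm : ℕ) :
    (∑ s ∈ range (dd+1), mono s (dd-s) (cf s)) * (X 0 + X 1 : MvPolynomial (Fin 2) K) ^ mm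
    = ∑ u ∈ range (dd+mm+1), mono u (dd+mm-u)
        (∑ s ∈ (range (dd+1)).filter (fun s => s ≤ u ∧ u ≤ s + mm),
          cf s * (mm.choose (u-s) : K)) := by
  rw [add_pow, Finset.sum_mul_sum]
  have step1 : ∀ s ∈ range (dd+1), ∀ j ∈ range (mm+1),
      mono s (dd-s) (cf s) * (X 0 ^ j * X 1 ^ (mm-j) * ((mm.choose j : ℕ) : MvPolynomial (Fin 2) K))
        = mono (s+j) ((dd-s)+(mm-j)) (cf s * (mm.choose j : K)) := by
    intro s hs j hj
    have hc : ((mm.choose j : ℕ) : MvPolynomial (Fin 2) K) = C ((mm.choose j : K)) := by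
      rw [map_natCast (C : K →+* MvPolynomial (Fin 2) K)]
    rw [hc, X_pow_mul_X_pow]
    calc mono s (dd-s) (cf s) * (mono j (mm-j) 1 * C ((mm.choose j : K)))
        = mono s (dd-s) (cf s) * mono j (mm-j) ((mm.choose j : K)) := by
          unfold mono; rw [mul_comm (monomial _ _) (C _), C_mul_monomial, mul_one]
      _ = mono (s+j) ((dd-s)+(mm-j)) (cf s * (mm.choose j : K)) := mono_mul _ _ _ _ _ _
  rw [Finset.sum_congr rfl (fun s hs => Finset.sum_congr rfl (fun j hj => step1 s hs j hj))]
  rw [← Finset.sum_product']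
  rw [← Finset.sum_fiberwise_of_maps_to (g := fun x : ℕ × ℕ => x.1 + x.2)
      (t := range (dd+mm+1)) (by
        intro x hx
        rw [Finset.mem_product] at hx
        simp only [Finset.mem_range] at hx ⊢
        omega)]
  refine Finset.sum_congr rfl (fun u hu => ?_)
  rw [Finset.mem_range] at hu
  have inner : ∀ x ∈ ((range (dd+1)) ×ˢ (range (mm+1))).filter (fun x => x.1 + x.2 = u),
      mono (x.1 + x.2) ((dd - x.1) + (mm - x.2)) (cf x.1 * (mm.choose x.2 : K))
        = mono u (dd+mm-u) (cf x.1 * (mm.choose (u - x.1) : K)) := by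
    intro x hx
    simp only [Finset.mem_filter, Finset.mem_product, Finset.mem_range] at hx
    obtain ⟨⟨h1, h2⟩, h3⟩ := hx
    have e1 : x.1 + x.2 = u := h3
    have e2 : (dd - x.1) + (mm - x.2) = dd + mm - u := by omega
    have e3 : x.2 = u - x.1 := by omega
    rw [e1, e2, e3]
  rw [Finset.sum_congr rfl inner]
  unfold mono
  rw [← map_sum (monomial (Finsupp.single (0 : Fin 2) u + Finsupp.single 1 (dd+mm-u)))]
  congr 1
  refine Finset.sum_nbij' (fun x => x.1) (fun s => (s, u - s)) ?_ ?_ ?_ ?_ ?_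
  · intro x hx
    simp only [Finset.mem_filter, Finset.mem_product, Finset.mem_range] at hx ⊢
    omega
  · intro s hs
    simp only [Finset.mem_filter, Finset.mem_product, Finset.mem_range] at hs ⊢
    omega
  · intro x hx
    simp only [Finset.mem_filter, Finset.mem_product, Finset.mem_range] at hx
    have : u - x.1 = x.2 := by omega
    simp [this]
  · intro s hs; rfl
  · intro x hx; rfl

/-- Splitting a monomial-row sum into an `A^mm` part and a `B^mm` part when
the middle coefficients vanish. -/
lemma split (δ : ℕ → K) (dd mm : ℕ) (hdm : dd < mm)
    (hδ : ∀ u, dd < u → u < mm → δ u = 0) :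
    ∑ u ∈ range (dd+mm+1), mono u (dd+mm-u) (δ u)
    = (∑ u ∈ (range (dd+mm+1)).filter (fun u => mm ≤ u), mono (u-mm) (dd+mm-u) (δ u))
        * (X 0 : MvPolynomial (Fin 2) K) ^ mm
      + (∑ u ∈ (range (dd+mm+1)).filter (fun u => u ≤ dd), mono u (dd-u) (δ u))
        * (X 1 : MvPolynomial (Fin 2) K) ^ mm := by
  have hA : ∀ u ∈ (range (dd+mm+1)).filter (fun u => mm ≤ u),
      mono (u-mm) (dd+mm-u) (δ u) * (X 0 : MvPolynomial (Fin 2) K) ^ mm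
        = mono u (dd+mm-u) (δ u) := by
    intro u hu
    simp only [Finset.mem_filter, Finset.mem_range] at hu
    rw [show (X 0 : MvPolynomial (Fin 2) K) ^ mm = X 0 ^ mm * X 1 ^ 0 by rw [pow_zero, mul_one],
      X_pow_mul_X_pow, mono_mul, mul_one]
    congr 1 <;> omega
  have hB : ∀ u ∈ (range (dd+mm+1)).filter (fun u => u ≤ dd),
      mono u (dd-u) (δ u) * (X 1 : MvPolynomial (Fin 2) K) ^ mm
        = mono u (dd+mm-u) (δ u) := by
    intro u hu
    simp only [Finset.mem_filter, Finset.mem_range] at hu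
    rw [show (X 1 : MvPolynomial (Fin 2) K) ^ mm = X 0 ^ 0 * X 1 ^ mm by rw [pow_zero, one_mul],
      X_pow_mul_X_pow, mono_mul, mul_one]
    congr 1 <;> omega
  rw [Finset.sum_mul, Finset.sum_mul,
    Finset.sum_congr rfl hA, Finset.sum_congr rfl hB]
  rw [← Finset.sum_filter_add_sum_filter_not (range (dd+mm+1)) (fun u => mm ≤ u)]
  congr 1
  refine (Finset.sum_subset ?_ ?_).symm
  · intro u hu
    simp only [Finset.mem_filter, Finset.mem_range] at hu ⊢
    omega
  · intro u hu hnu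
    simp only [Finset.mem_filter, Finset.mem_range, not_and, not_le] at hu hnu
    rw [hδ u (by omega) (by omega), mono_zero]

/-- Homogeneity of a row sum. -/
lemma row_isHomogeneous {s : Finset ℕ} (eu vu : ℕ → ℕ) (c : ℕ → K) (N : ℕ)
    (h : ∀ u ∈ s, eu u + vu u = N) :
    (∑ u ∈ s, mono (eu u) (vu u) (c u)).IsHomogeneous N := by
  apply MvPolynomial.IsHomogeneous.sum
  intro u hu
  exact mono_isHomogeneous (h u hu) _
lemma sum_eq_02 (μ : Fin 2 →₀ ℕ) : (μ.sum fun _ e => e) = μ 0 + μ 1 := by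
  rw [Finsupp.sum_fintype]
  · exact Fin.sum_univ_two _
  · intro _; rfl

/-- The key injectivity lemma: a homogeneous form of low degree whose product with
`(X 0 + X 1) ^ m'` lies in `(X 0 ^ m', X 1 ^ m')` (with homogeneous cofactors) is zero. -/
lemma inj_core (cf : ℕ → K) (κ m' k' : ℕ)
    (hdeg : κ + (k' + 1) < m') (hκk : κ < k' + 1)
    (hfrob : (X 0 + X 1 : MvPolynomial (Fin 2) K) ^ (m' + k' + 1)
        = X 0 ^ (m' + k' + 1) + X 1 ^ (m' + k' + 1))
    (a b : MvPolynomial (Fin 2) K)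
    (ha : a.IsHomogeneous κ) (hb : b.IsHomogeneous κ)
    (heq : (∑ t ∈ range (κ+1), mono t (κ-t) (cf t)) * (X 0 + X 1) ^ m'
        = a * X 0 ^ m' + b * X 1 ^ m') :
    ∀ t, t ≤ κ → cf t = 0 := by
  set g : MvPolynomial (Fin 2) K := ∑ t ∈ range (κ+1), mono t (κ-t) (cf t) with hgdef
  have hg : g.IsHomogeneous κ := by
    apply row_isHomogeneous
    intro u hu
    rw [Finset.mem_range] at hu
    omega
  have hX0 : (X 0 : MvPolynomial (Fin 2) K).IsHomogeneous 1 := isHomogeneous_X _ _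
  have hX1 : (X 1 : MvPolynomial (Fin 2) K).IsHomogeneous 1 := isHomogeneous_X _ _
  have hXp : ∀ i : Fin 2, ∀ r : ℕ, ((X i : MvPolynomial (Fin 2) K) ^ r).IsHomogeneous r := by
    intro i r
    have := (isHomogeneous_X K i).pow r
    rwa [one_mul] at this
  have hCp : ∀ r : ℕ, ((X 0 + X 1 : MvPolynomial (Fin 2) K) ^ r).IsHomogeneous r := by
    intro r
    have := (hX0.add hX1).pow r
    rwa [one_mul] at this
  -- multiply by C^(k'+1) and use the Frobenius identity
  have key : X 0 ^ m' * (g * X 0 ^ (k'+1) - a * (X 0 + X 1) ^ (k'+1))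
      = X 1 ^ m' * (b * (X 0 + X 1) ^ (k'+1) - g * X 1 ^ (k'+1)) := by
    have h1 : (X 0 + X 1 : MvPolynomial (Fin 2) K) ^ (m' + k' + 1)
        = (X 0 + X 1) ^ m' * (X 0 + X 1) ^ (k'+1) := by
      rw [show m' + k' + 1 = m' + (k'+1) by omega, pow_add]
    have h2 : (X 0 : MvPolynomial (Fin 2) K) ^ (m' + k' + 1)
        = X 0 ^ m' * X 0 ^ (k'+1) := by
      rw [show m' + k' + 1 = m' + (k'+1) by omega, pow_add]
    have h3 : (X 1 : MvPolynomial (Fin 2) K) ^ (m' + k' + 1)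
        = X 1 ^ m' * X 1 ^ (k'+1) := by
      rw [show m' + k' + 1 = m' + (k'+1) by omega, pow_add]
    rw [h1, h2, h3] at hfrob
    linear_combination ((X 0 + X 1 : MvPolynomial (Fin 2) K) ^ (k'+1)) * heq - g * hfrob
  have hP : (g * X 0 ^ (k'+1) - a * (X 0 + X 1) ^ (k'+1)).IsHomogeneous (κ + (k'+1)) :=
    (hg.mul (hXp 0 (k'+1))).sub (ha.mul (hCp (k'+1)))
  have hQ : (b * (X 0 + X 1) ^ (k'+1) - g * X 1 ^ (k'+1)).IsHomogeneous (κ + (k'+1)) :=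
    (hb.mul (hCp (k'+1))).sub (hg.mul (hXp 1 (k'+1)))
  have hP0 : g * X 0 ^ (k'+1) - a * (X 0 + X 1) ^ (k'+1) = 0 := by
    by_contra hP0
    have hne : X 0 ^ m' * (g * X 0 ^ (k'+1) - a * (X 0 + X 1) ^ (k'+1)) ≠ 0 :=
      mul_ne_zero (pow_ne_zero _ (X_ne_zero _)) hP0
    obtain ⟨μ, hμ⟩ := MvPolynomial.support_nonempty.mpr hne
    have hc : coeff μ (X 0 ^ m' * (g * X 0 ^ (k'+1) - a * (X 0 + X 1) ^ (k'+1))) ≠ 0 :=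
      mem_support_iff.mp hμ
    have hc' : coeff μ (X 1 ^ m' * (b * (X 0 + X 1) ^ (k'+1) - g * X 1 ^ (k'+1))) ≠ 0 := by
      rw [← key]; exact hc
    have h0 : m' ≤ μ 0 := by
      by_contra hlt
      apply hc
      rw [X_pow_eq_monomial, coeff_monomial_mul', if_neg]
      intro hle
      exact hlt (by simpa using Finsupp.single_le_iff.mp hle)
    have h1 : m' ≤ μ 1 := by
      by_contra hlt
      apply hc'
      rw [X_pow_eq_monomial, coeff_monomial_mul', if_neg]
      intro hle
      exact hlt (by simpa using Finsupp.single_le_iff.mp hle)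
    have hhom : (X 0 ^ m' * (g * X 0 ^ (k'+1) - a * (X 0 + X 1) ^ (k'+1))).IsHomogeneous
        (m' + (κ + (k'+1))) := (hXp 0 m').mul hP
    have hdd : μ.degree = m' + (κ + (k'+1)) := by
      by_contra hne2
      exact hc (hhom.coeff_eq_zero hne2)
    rw [deg2] at hdd
    omega
  have heq5 : g * X 0 ^ (k'+1) = a * (X 0 + X 1) ^ (k'+1) := by
    rw [sub_eq_zero] at hP0; exact hP0
  -- transfer through the substitution X1 ↦ X1 - X0
  set F : Fin 2 → MvPolynomial (Fin 2) K := ![X 0, X 1 - X 0] with hF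
  have hF0 : F 0 = X 0 := rfl
  have hF1 : F 1 = X 1 - X 0 := rfl
  set g1 : MvPolynomial (Fin 2) K := aeval F g with hg1def
  have hg1 : g1 = ∑ t ∈ range (κ+1), C (cf t) * (X 0 ^ t * (X 1 - X 0) ^ (κ - t)) := by
    rw [hg1def, hgdef, map_sum]
    refine Finset.sum_congr rfl (fun t ht => ?_)
    rw [aeval_mono, hF0, hF1]
  have happ : g1 * X 0 ^ (k'+1) = (aeval F a) * X 1 ^ (k'+1) := by
    have := congrArg (aeval F) heq5
    rw [map_mul, map_mul, map_pow, map_pow, aeval_X, hF0] at this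
    have hCX : aeval (R := K) F (X 0 + X 1) = X 1 := by
      simp only [map_add, aeval_X, hF0, hF1]
      ring
    rw [hCX] at this
    exact this
  have htd : g1.totalDegree ≤ κ := by
    rw [hg1]
    refine le_trans (totalDegree_finset_sum _ _) (Finset.sup_le (fun t ht => ?_))
    rw [Finset.mem_range] at ht
    refine le_trans (totalDegree_mul _ _) ?_
    have e1 : (C (cf t) : MvPolynomial (Fin 2) K).totalDegree = 0 := totalDegree_C _
    rw [e1, zero_add]
    refine le_trans (totalDegree_mul _ _) ?_
    have e2 : ((X 0 : MvPolynomial (Fin 2) K) ^ t).totalDegree = t := totalDegree_X_pow _ _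
    have e3 : ((X 1 - X 0 : MvPolynomial (Fin 2) K) ^ (κ - t)).totalDegree ≤ (κ - t) * 1 := by
      refine le_trans (totalDegree_pow _ _) ?_
      apply Nat.mul_le_mul_left
      rw [sub_eq_add_neg]
      refine le_trans (totalDegree_add _ _) ?_
      rw [totalDegree_neg, totalDegree_X, totalDegree_X]
      simp
    omega
  have hg10 : g1 = 0 := by
    apply MvPolynomial.ext
    intro μ
    rw [coeff_zero]
    by_cases hμ1 : k' + 1 ≤ μ 1
    · by_contra hcne
      have hmem : μ ∈ g1.support := mem_support_iff.mpr hcne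
      have := MvPolynomial.le_totalDegree hmem
      rw [sum_eq_02] at this
      omega
    · push_neg at hμ1
      have e1 : coeff μ g1 = coeff (μ + Finsupp.single 0 (k'+1)) (g1 * X 0 ^ (k'+1)) := by
        rw [X_pow_eq_monomial, coeff_mul_monomial, mul_one]
      rw [e1, happ, X_pow_eq_monomial, coeff_mul_monomial', if_neg]
      intro hle
      have := Finsupp.single_le_iff.mp hle
      rw [Finsupp.add_apply] at this
      simp [Finsupp.single_apply] at this
      omega
  -- recover g via the inverse substitution
  have hgz : g = 0 := by
    set F' : Fin 2 → MvPolynomial (Fin 2) K := ![X 0, X 0 + X 1] with hF'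
    have hF'0 : F' 0 = X 0 := rfl
    have hF'1 : F' 1 = X 0 + X 1 := rfl
    have hback : aeval F' g1 = g := by
      rw [hg1, map_sum, hgdef]
      refine Finset.sum_congr rfl (fun t ht => ?_)
      rw [map_mul, map_mul, map_pow, map_pow, map_sub, aeval_X, aeval_X, aeval_C,
        hF'0, hF'1, mono_eq_C_mul]
      rw [show (X 0 + X 1 : MvPolynomial (Fin 2) K) - X 0 = X 1 by ring]
      rw [algebraMap_eq]
    rw [← hback, hg10, map_zero]
  intro t ht
  have hco := congrArg (coeff (Finsupp.single (0 : Fin 2) t + Finsupp.single 1 (κ - t))) hgz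
  rw [hgdef, coeff_sum, coeff_zero] at hco
  rw [← hco]
  rw [Finset.sum_eq_single t]
  · rw [coeff_mono, if_pos ⟨rfl, rfl⟩]
  · intro t2 ht2 hne
    rw [coeff_mono, if_neg]
    rintro ⟨h1, -⟩
    exact hne h1
  · intro hnt
    exfalso
    exact hnt (Finset.mem_range.mpr (by omega))
/-- Surjectivity of the binomial-coefficient window matrix. -/
lemma phi_surj (d k m : ℕ) (hm : d + k = m) (h2k : 2 * k ≤ m) (hk : 1 ≤ k)
    (hfrob : (X 0 + X 1 : MvPolynomial (Fin 2) K) ^ (m + k + 1)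
        = X 0 ^ (m + k + 1) + X 1 ^ (m + k + 1)) :
    Function.Surjective (Matrix.mulVec
      ((fun (i : Fin (k-1)) (s : Fin (d+1)) => ((m.choose (d+1+i-s)) : K))
        : Matrix (Fin (k-1)) (Fin (d+1)) K)) := by
  set Φ : Matrix (Fin (k-1)) (Fin (d+1)) K :=
    fun i s => ((m.choose (d+1+i-s)) : K) with hΦ
  have hli : LinearIndependent K (fun i : Fin (k-1) => Φ i) := by
    rw [Fintype.linearIndependent_iff]
    intro cvec hsum i
    have hk2 : 2 ≤ k := by have := i.isLt; omega
    set κ := k - 2 with hκ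
    set cv : ℕ → K := fun t => if h : t < k-1 then cvec ⟨t, h⟩ else 0 with hcv
    set cf : ℕ → K := fun t => cv (κ - t) with hcf
    have hrow : ∀ s : ℕ, s ≤ d →
        ∑ t ∈ range (k-1), cv t * (m.choose (d+1+t-s) : K) = 0 := by
      intro s hs
      have h1 := congrFun hsum ⟨s, by omega⟩
      simp only [Finset.sum_apply, Pi.smul_apply, smul_eq_mul, Pi.zero_apply] at h1
      rw [← Fin.sum_univ_eq_sum_range (fun t => cv t * (m.choose (d+1+t-s) : K)) (k-1)]
      rw [← h1]
      refine Finset.sum_congr rfl (fun i2 _ => ?_)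
      simp only [hcv, hΦ]
      rw [dif_pos i2.isLt]
    have hwin : ∀ u, κ < u → u < m →
        (∑ s ∈ (range (κ+1)).filter (fun s => s ≤ u ∧ u ≤ s + m), cf s * (m.choose (u-s) : K))
          = 0 := by
      intro u hu1 hu2
      rw [Finset.filter_true_of_mem (by
        intro s hs
        rw [Finset.mem_range] at hs
        omega)]
      rw [← Finset.sum_range_reflect (fun t => cf t * (m.choose (u-t) : K)) (κ+1)]
      have step : ∀ t ∈ range (κ+1),
          cf (κ + 1 - 1 - t) * (m.choose (u - (κ + 1 - 1 - t)) : K)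
            = cv t * (m.choose (d+1+t-(m-1-u)) : K) := by
        intro t ht
        rw [Finset.mem_range] at ht
        have e1 : κ + 1 - 1 - t = κ - t := by omega
        rw [e1]
        simp only [hcf]
        have e2 : κ - (κ - t) = t := by omega
        have e3 : u - (κ - t) = d+1+t-(m-1-u) := by omega
        rw [e2, e3]
      rw [Finset.sum_congr rfl step]
      have : range (κ+1) = range (k-1) := by rw [hκ]; congr 1; omega
      rw [this]
      exact hrow (m-1-u) (by omega)
    have hgrp := group cf κ m
    have hsplit := split
      (fun u => ∑ s ∈ (range (κ+1)).filter (fun s => s ≤ u ∧ u ≤ s + m),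
        cf s * (m.choose (u-s) : K)) κ m (by omega) hwin
    have heq := hgrp.trans hsplit
    have hahom : (∑ u ∈ (range (κ+m+1)).filter (fun u => m ≤ u),
        mono (u-m) (κ+m-u) ((fun u => ∑ s ∈ (range (κ+1)).filter (fun s => s ≤ u ∧ u ≤ s + m),
          cf s * (m.choose (u-s) : K)) u)).IsHomogeneous κ := by
      apply row_isHomogeneous
      intro u hu
      simp only [Finset.mem_filter, Finset.mem_range] at hu
      omega
    have hbhom : (∑ u ∈ (range (κ+m+1)).filter (fun u => u ≤ κ),
        mono u (κ-u) ((fun u => ∑ s ∈ (range (κ+1)).filter (fun s => s ≤ u ∧ u ≤ s + m),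
          cf s * (m.choose (u-s) : K)) u)).IsHomogeneous κ := by
      apply row_isHomogeneous
      intro u hu
      simp only [Finset.mem_filter, Finset.mem_range] at hu
      omega
    have hconc := inj_core cf κ m k (by omega) (by omega) hfrob _ _ hahom hbhom heq
    have hfin := hconc (κ - i.val) (by omega)
    simp only [hcf] at hfin
    have e4 : κ - (κ - i.val) = i.val := by have := i.isLt; omega
    rw [e4] at hfin
    simp only [hcv] at hfin
    rw [dif_pos i.isLt] at hfin
    rw [← hfin]
  have hrank : Φ.rank = k - 1 := by
    rw [hli.rank_matrix, Fintype.card_fin]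
  have hrangetop : LinearMap.range Φ.mulVecLin = ⊤ := by
    apply Submodule.eq_top_of_finrank_eq
    have : Module.finrank K (Fin (k-1) → K) = k - 1 := by
      rw [Module.finrank_fintype_fun_eq_card, Fintype.card_fin]
    rw [this]
    exact hrank
  intro y
  have hy : y ∈ LinearMap.range Φ.mulVecLin := by rw [hrangetop]; trivial
  obtain ⟨x, hx⟩ := hy
  exact ⟨x, by rw [← Matrix.mulVecLin_apply]; exact hx⟩
/-- The main membership, in generic exponent form. -/
lemma main_core (d k m : ℕ) (hdk : d + k = m) (h2k : 2 * k ≤ m) (hk : 1 ≤ k)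
    (hfrob : (X 0 + X 1 : MvPolynomial (Fin 2) K) ^ (m + k + 1)
        = X 0 ^ (m + k + 1) + X 1 ^ (m + k + 1)) :
    (X 0 * X 1 : MvPolynomial (Fin 2) K) ^ d * (X 0 + X 1) ^ k ∈
      Ideal.span {(X 0 : MvPolynomial (Fin 2) K) ^ m, X 1 ^ m, (X 0 + X 1) ^ m} := by
  obtain ⟨x, hx⟩ := phi_surj d k m hdk h2k hk hfrob
    (fun i : Fin (k-1) => ((k.choose (i.val + 1)) : K))
  set xf : ℕ → K := fun s => if h : s < d + 1 then x ⟨s, h⟩ else 0 with hxf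
  set cM : ℕ → K := fun u => if d ≤ u ∧ u ≤ d + k then ((k.choose (u - d)) : K) else 0 with hcM
  -- expansion of the target element
  have hM : (X 0 * X 1 : MvPolynomial (Fin 2) K) ^ d * (X 0 + X 1) ^ k
      = ∑ u ∈ range (d+m+1), mono u (d+m-u) (cM u) := by
    rw [mul_pow, add_pow, Finset.mul_sum]
    have hterm : ∀ j ∈ range (k+1),
        (X 0 : MvPolynomial (Fin 2) K) ^ d * X 1 ^ d
            * (X 0 ^ j * X 1 ^ (k - j) * ((k.choose j : ℕ) : MvPolynomial (Fin 2) K))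
          = mono (d+j) (m-j) ((k.choose j : K)) := by
      intro j hj
      rw [Finset.mem_range] at hj
      have hc : ((k.choose j : ℕ) : MvPolynomial (Fin 2) K) = C ((k.choose j : K)) := by
        rw [map_natCast (C : K →+* MvPolynomial (Fin 2) K)]
      rw [hc, X_pow_mul_X_pow, X_pow_mul_X_pow]
      rw [show mono j (k-j) (1:K) * C ((k.choose j : K))
          = mono j (k-j) ((k.choose j : K)) by
        unfold mono; rw [mul_comm (monomial _ _) (C _), C_mul_monomial, mul_one]]
      rw [mono_mul, one_mul]
      congr 1
      omega
    rw [Finset.sum_congr rfl hterm]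
    have h1 : ∑ u ∈ (range (d+m+1)).filter (fun u => d ≤ u ∧ u ≤ d + k),
          mono u (d+m-u) (cM u)
        = ∑ u ∈ range (d+m+1), mono u (d+m-u) (cM u) := by
      refine Finset.sum_subset
        (Finset.filter_subset (fun u => d ≤ u ∧ u ≤ d + k) (range (d+m+1))) ?_
      intro u hu hnu
      rw [Finset.mem_filter] at hnu
      have hz : cM u = 0 := by
        simp only [hcM]
        rw [if_neg (fun hc => hnu ⟨hu, hc⟩)]
      rw [hz, mono_zero]
    rw [← h1]
    refine (Finset.sum_nbij' (fun u => u - d) (fun j => d + j) ?_ ?_ ?_ ?_ ?_).symm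
    · intro u hu
      simp only [Finset.mem_filter, Finset.mem_range] at hu ⊢
      omega
    · intro j hj
      simp only [Finset.mem_filter, Finset.mem_range] at hj ⊢
      omega
    · intro u hu
      simp only [Finset.mem_filter, Finset.mem_range] at hu
      show d + (u - d) = u
      omega
    · intro j hj
      simp only [Finset.mem_range] at hj
      show d + j - d = j
      omega
    · intro u hu
      simp only [Finset.mem_filter, Finset.mem_range] at hu
      have e1 : d + (u - d) = u := by omega
      have e2 : m - (u - d) = d + m - u := by omega
      have e3 : cM u = ((k.choose (u - d)) : K) := by
        simp only [hcM]
        rw [if_pos ⟨hu.2.1, hu.2.2⟩]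
      rw [e1, e2, e3]
  have hgrp := group xf d m
  have hδwin : ∀ u, d < u → u < m →
      cM u - (∑ s ∈ (range (d+1)).filter (fun s => s ≤ u ∧ u ≤ s + m),
        xf s * (m.choose (u - s) : K)) = 0 := by
    intro u hu1 hu2
    have hcMu : cM u = ((k.choose (u - d)) : K) := by
      simp only [hcM]
      rw [if_pos ⟨by omega, by omega⟩]
    have hγu : (∑ s ∈ (range (d+1)).filter (fun s => s ≤ u ∧ u ≤ s + m),
        xf s * (m.choose (u - s) : K)) = ((k.choose (u - d)) : K) := by
      rw [Finset.filter_true_of_mem (by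
        intro s hs
        rw [Finset.mem_range] at hs
        omega)]
      have hmv := congrFun hx ⟨u - (d+1), by omega⟩
      simp only [Matrix.mulVec, dotProduct] at hmv
      rw [← Fin.sum_univ_eq_sum_range (fun s => xf s * (m.choose (u - s) : K)) (d+1)]
      have hstep : ∀ s : Fin (d+1),
          xf s.val * (m.choose (u - s.val) : K)
            = ((m.choose (d+1+(u-(d+1))-s.val)) : K) * x s := by
        intro s
        have e1 : d+1+(u-(d+1)) = u := by omega
        rw [e1]
        simp only [hxf]
        rw [dif_pos s.isLt, mul_comm]
      rw [Finset.sum_congr rfl (fun s _ => hstep s), hmv]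
      show ((k.choose (u - (d+1) + 1) : ℕ) : K) = ((k.choose (u - d) : ℕ) : K)
      rw [show u - (d+1) + 1 = u - d by omega]
    rw [hcMu, hγu, sub_self]
  have hMHC : (X 0 * X 1 : MvPolynomial (Fin 2) K) ^ d * (X 0 + X 1) ^ k
      - (∑ s ∈ range (d+1), mono s (d-s) (xf s)) * (X 0 + X 1) ^ m
      = ∑ u ∈ range (d+m+1), mono u (d+m-u)
          (cM u - (∑ s ∈ (range (d+1)).filter (fun s => s ≤ u ∧ u ≤ s + m),
            xf s * (m.choose (u - s) : K))) := by
    rw [hM, hgrp, ← Finset.sum_sub_distrib]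
    refine Finset.sum_congr rfl (fun u hu => ?_)
    unfold mono
    rw [← map_sub]
  have hsplit := split (fun u => cM u
      - (∑ s ∈ (range (d+1)).filter (fun s => s ≤ u ∧ u ≤ s + m),
        xf s * (m.choose (u - s) : K))) d m (by omega) hδwin
  have hfinal : (X 0 * X 1 : MvPolynomial (Fin 2) K) ^ d * (X 0 + X 1) ^ k
      = (∑ u ∈ (range (d+m+1)).filter (fun u => m ≤ u),
            mono (u-m) (d+m-u) (cM u
              - (∑ s ∈ (range (d+1)).filter (fun s => s ≤ u ∧ u ≤ s + m),
                xf s * (m.choose (u - s) : K)))) * X 0 ^ m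
        + (∑ u ∈ (range (d+m+1)).filter (fun u => u ≤ d),
            mono u (d-u) (cM u
              - (∑ s ∈ (range (d+1)).filter (fun s => s ≤ u ∧ u ≤ s + m),
                xf s * (m.choose (u - s) : K)))) * X 1 ^ m
        + (∑ s ∈ range (d+1), mono s (d-s) (xf s)) * (X 0 + X 1) ^ m := by
    have hh := hMHC.trans hsplit
    linear_combination hh
  rw [hfinal]
  have hXA : (X 0 : MvPolynomial (Fin 2) K) ^ m
      ∈ Ideal.span {(X 0 : MvPolynomial (Fin 2) K) ^ m, X 1 ^ m, (X 0 + X 1) ^ m} :=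
    Ideal.subset_span (Set.mem_insert _ _)
  have hXB : (X 1 : MvPolynomial (Fin 2) K) ^ m
      ∈ Ideal.span {(X 0 : MvPolynomial (Fin 2) K) ^ m, X 1 ^ m, (X 0 + X 1) ^ m} :=
    Ideal.subset_span (Set.mem_insert_of_mem _ (Set.mem_insert _ _))
  have hXC : ((X 0 + X 1 : MvPolynomial (Fin 2) K)) ^ m
      ∈ Ideal.span {(X 0 : MvPolynomial (Fin 2) K) ^ m, X 1 ^ m, (X 0 + X 1) ^ m} :=
    Ideal.subset_span (Set.mem_insert_of_mem _ (Set.mem_insert_of_mem _ rfl))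
  exact Ideal.add_mem _
    (Ideal.add_mem _ (Ideal.mul_mem_left _ _ hXA) (Ideal.mul_mem_left _ _ hXB))
    (Ideal.mul_mem_left _ _ hXC)

end Stmt2Aux

open Stmt2Aux in
theorem stmt_2 (K : Type*) [Field K] (p n e k : ℕ) [Fact p.Prime] [CharP K p]
    (hn : 3 ≤ n) (he : 1 ≤ e) (hk : 1 ≤ k) (hq : p ^ e = n * k + 1)
    (A B : MvPolynomial (Fin 2) K) (hA : A = X 0) (hB : B = X 1) :
    (A * B) ^ ((n - 2) * k) * (A + B) ^ k ∈
      Ideal.span {A ^ ((n - 1) * k), B ^ ((n - 1) * k), (A + B) ^ ((n - 1) * k)} := by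
  subst hA hB
  have hdk : (n - 2) * k + k = (n - 1) * k := by
    calc (n - 2) * k + k = ((n - 2) + 1) * k := by rw [add_mul, one_mul]
    _ = (n - 1) * k := by rw [show (n - 2) + 1 = n - 1 by omega]
  have hnk : (n - 1) * k + k = n * k := by
    calc (n - 1) * k + k = ((n - 1) + 1) * k := by rw [add_mul, one_mul]
    _ = n * k := by rw [show (n - 1) + 1 = n by omega]
  have h2k : 2 * k ≤ (n - 1) * k := Nat.mul_le_mul_right k (by omega)
  have hq2 : (n - 1) * k + k + 1 = p ^ e := by rw [hq]; omega
  have hfrob : (X 0 + X 1 : MvPolynomial (Fin 2) K) ^ ((n - 1) * k + k + 1)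
      = X 0 ^ ((n - 1) * k + k + 1) + X 1 ^ ((n - 1) * k + k + 1) := by
    rw [hq2]
    exact add_pow_char_pow _ _ p e
  exact main_core ((n - 2) * k) k ((n - 1) * k) hdk h2k hk hfrob
end

section
/- Let K[A,B] be a polynomial ring over a field K of characteristic p = 6m+5 with m ≥ 0. Then (AB(A+B))^{2m+1} lies in the ideal (A^{4m+3}, B^{4m+3}, (A+B)^{4m+3}). -/
set_option maxHeartbeats 1000000

open MvPolynomial

namespace Stmt3Aux

open Polynomial Finset

variable (K : Type*) [Field K]

noncomputable def hpol (m : ℕ) : Polynomial K :=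
  ∑ b ∈ range (2*m+1), Polynomial.C (((4*m+3).choose (2*m+1-b) : K)) * Polynomial.X ^ b

noncomputable def Wpol (m : ℕ) : Polynomial K :=
  (1 + Polynomial.X)^(4*m+3) * hpol K m

noncomputable def Lpol (m : ℕ) : Polynomial K :=
  -∑ j ∈ range (2*m+1), Polynomial.C ((Wpol K m).coeff (2*m - j)) * Polynomial.X ^ j

noncomputable def Ppol (m : ℕ) : Polynomial K :=
  Lpol K m + Polynomial.X^(2*m+1) * (1+Polynomial.X)^(2*m+1)

noncomputable def Zpol (m : ℕ) : Polynomial K :=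
  Ppol K m * (1+Polynomial.X)^(2*m+2)

noncomputable def Rpol (m : ℕ) : Polynomial K := Zpol K m %ₘ Polynomial.X^(4*m+3)
noncomputable def Mpol (m : ℕ) : Polynomial K := Zpol K m /ₘ Polynomial.X^(4*m+3)

noncomputable def Tpol (m : ℕ) : Polynomial K :=
  Mpol K m * (1+Polynomial.X)^(4*m+3) - Polynomial.X^(2*m+2) * Ppol K m

lemma hpol_coeff (m b : ℕ) :
    (hpol K m).coeff b
      = if b < 2*m+1 then ((4*m+3).choose (2*m+1-b) : K) else 0 := by
  rw [hpol]
  simp only [Polynomial.finset_sum_coeff, Polynomial.coeff_C_mul, Polynomial.coeff_X_pow,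
    mul_ite, mul_one, mul_zero]
  rw [Finset.sum_ite_eq (range (2*m+1)) b]
  simp [Finset.mem_range]

lemma Wpol_coeff (m t : ℕ) :
    (Wpol K m).coeff t
      = ∑ x ∈ range (t+1), ((4*m+3).choose x : K) * (hpol K m).coeff (t - x) := by
  rw [Wpol, Polynomial.coeff_mul, Finset.Nat.sum_antidiagonal_eq_sum_range_succ_mk]
  exact Finset.sum_congr rfl fun x hx => by rw [coeff_one_add_X_pow]

lemma nat_vandermonde (n : ℕ) :
    ((2*n+1) + (2*n+1)).choose (2*n+1)
      = 2 * ∑ x ∈ range (n+1), ((2*n+1).choose x)^2 := by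
  rw [Nat.add_choose_eq, Finset.Nat.sum_antidiagonal_eq_sum_range_succ_mk]
  have h1 : ∀ x ∈ range (2*n+1+1),
      (2*n+1).choose x * (2*n+1).choose (2*n+1-x) = ((2*n+1).choose x)^2 := by
    intro x hx
    rw [Nat.choose_symm (by simpa using Nat.lt_succ_iff.mp (Finset.mem_range.mp hx)), sq]
  rw [Finset.sum_congr rfl h1]
  have h2 : range (2*n+1+1) = Finset.Ico 0 (n+1) ∪ Finset.Ico (n+1) (2*n+2) := by
    rw [Finset.Ico_union_Ico_eq_Ico (by omega) (by omega), Finset.range_eq_Ico]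
  rw [h2, Finset.sum_union (Finset.Ico_disjoint_Ico_consecutive 0 (n+1) (2*n+2)),
    ← Finset.range_eq_Ico, Finset.sum_Ico_eq_sum_range]
  have h4 : (2*n+2 - (n+1)) = n+1 := by omega
  rw [h4]
  have h3 : ∀ i ∈ range (n+1), ((2*n+1).choose (n+1+i))^2
      = ((2*n+1).choose (n - i))^2 := by
    intro i hi
    have hi' : i < n+1 := Finset.mem_range.mp hi
    congr 1
    rw [← Nat.choose_symm (show n+1+i ≤ 2*n+1 by omega)]
    congr 1
    omega
  rw [Finset.sum_congr rfl h3]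
  have h5 : ∑ i ∈ range (n+1), ((2*n+1).choose (n - i))^2
      = ∑ i ∈ range (n+1), ((2*n+1).choose i)^2 := by
    have := Finset.sum_range_reflect (fun i => ((2*n+1).choose i)^2) (n+1)
    simpa using this
  rw [h5]
  omega

variable (p m : ℕ) [Fact p.Prime] [CharP K p]

lemma sum_sq_zero (hp : p = 6*m+5) :
    ∑ x ∈ range (2*m+2), (((4*m+3).choose x : K))^2 = 0 := by
  have hnat := nat_vandermonde (2*m+1)
  have hdvd : p ∣ ((2*(2*m+1)+1) + (2*(2*m+1)+1)).choose (2*(2*m+1)+1) := by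
    apply Nat.Prime.dvd_choose (Fact.out : p.Prime) <;> omega
  rw [hnat] at hdvd
  have hcast : ((2 * ∑ x ∈ range (2*m+1+1), ((2*(2*m+1)+1).choose x)^2 : ℕ) : K) = 0 :=
    (CharP.cast_eq_zero_iff K p _).mpr hdvd
  push_cast at hcast
  have h2 : (2 : K) ≠ 0 := by
    intro h
    have hd := (CharP.cast_eq_zero_iff K p 2).mp h
    have := Nat.le_of_dvd (by norm_num) hd
    omega
  have he1 : 2*(2*m+1)+1 = 4*m+3 := by omega
  have he2 : 2*m+1+1 = 2*m+2 := by omega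
  rw [he1, he2] at hcast
  rcases mul_eq_zero.mp hcast with h | h
  · exact absurd h h2
  · exact h

lemma Wpol_coeff_top (hp : p = 6*m+5) : (Wpol K m).coeff (2*m+1) = -1 := by
  rw [Wpol_coeff, Finset.sum_range_succ']
  have hf0 : ((4*m+3).choose 0 : K) * (hpol K m).coeff (2*m+1-0) = 0 := by
    rw [hpol_coeff, if_neg (by omega)]
    ring
  have hfi : ∀ i ∈ range (2*m+1),
      ((4*m+3).choose (i+1) : K) * (hpol K m).coeff (2*m+1-(i+1))
        = ((4*m+3).choose (i+1) : K)^2 := by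
    intro i hi
    have hi' : i < 2*m+1 := Finset.mem_range.mp hi
    rw [hpol_coeff, if_pos (by omega), show 2*m+1 - (2*m+1-(i+1)) = i+1 by omega, sq]
  rw [hf0, Finset.sum_congr rfl hfi, add_zero]
  have hzero := sum_sq_zero K p m hp
  rw [Finset.sum_range_succ'] at hzero
  have h0 : ((4*m+3).choose 0 : K)^2 = 1 := by norm_num
  rw [h0] at hzero
  linear_combination hzero

lemma coeff_C_mul_X_pow_mul (c : K) (j t : ℕ) (g : Polynomial K) (hj : j ≤ t) :
    (Polynomial.C c * (Polynomial.X^j * g)).coeff t = c * g.coeff (t - j) := by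
  rw [Polynomial.coeff_C_mul]
  congr 1
  conv_lhs => rw [show t = (t-j)+j by omega]
  rw [Polynomial.coeff_X_pow_mul]

lemma core (hp : p = 6*m+5) (k : ℕ) (hk : k ≤ 2*m+1) :
    ∑ i ∈ range (2*m+1), (Wpol K m).coeff i * ((2*m+2).choose (k+1+i) : K)
      = ((4*m+3).choose k : K) := by
  have hWh : Wpol K m * (1+Polynomial.X)^(2*m+2)
      = hpol K m + Polynomial.X^(6*m+5) * hpol K m := by
    rw [Wpol, mul_comm ((1+Polynomial.X)^(4*m+3)) (hpol K m), mul_assoc, ← pow_add,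
      show 4*m+3 + (2*m+2) = 6*m+5 by omega]
    have hchar : ((1:Polynomial K) + Polynomial.X)^(6*m+5)
        = 1 + Polynomial.X^(6*m+5) := by
      rw [← hp]
      simpa using add_pow_char (R := Polynomial K) (x := (1 : Polynomial K)) (y := Polynomial.X) (p := p)
    rw [hchar]
    ring
  have hprod : (Wpol K m * (1+Polynomial.X)^(2*m+2)).coeff (2*m+1-k)
      = (hpol K m).coeff (2*m+1-k) := by
    rw [hWh, Polynomial.coeff_add]
    have hz : (Polynomial.X^(6*m+5) * hpol K m).coeff (2*m+1-k) = 0 := by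
      rw [Polynomial.coeff_X_pow_mul', if_neg (by omega)]
    rw [hz, add_zero]
  rw [Polynomial.coeff_mul, Finset.Nat.sum_antidiagonal_eq_sum_range_succ_mk] at hprod
  have hconv : ∑ x ∈ range (2*m+1-k+1),
      (Wpol K m).coeff x * ((1+Polynomial.X:Polynomial K)^(2*m+2)).coeff (2*m+1-k-x)
      = ∑ i ∈ range ((2*m+1)+1), (Wpol K m).coeff i * ((2*m+2).choose (k+1+i) : K) := by
    have hstep : ∑ x ∈ range (2*m+1-k+1),
        (Wpol K m).coeff x * ((1+Polynomial.X:Polynomial K)^(2*m+2)).coeff (2*m+1-k-x)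
        = ∑ x ∈ range (2*m+1-k+1), (Wpol K m).coeff x * ((2*m+2).choose (k+1+x) : K) := by
      apply Finset.sum_congr rfl
      intro x hx
      have hx' : x ≤ 2*m+1-k := by have := Finset.mem_range.mp hx; omega
      rw [coeff_one_add_X_pow]
      congr 2
      rw [← Nat.choose_symm (show k+1+x ≤ 2*m+2 by omega)]
      congr 1
      omega
    rw [hstep]
    apply Finset.sum_subset (Finset.range_subset_range.mpr (by omega : 2*m+1-k+1 ≤ (2*m+1)+1))
    intro x hx hnx
    have hx1 : x < (2*m+1)+1 := Finset.mem_range.mp hx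
    have hx2 : 2*m+1-k < x := by
      by_contra hcon
      exact hnx (Finset.mem_range.mpr (by omega))
    rw [Nat.choose_eq_zero_of_lt (by omega)]
    norm_num
  rw [hconv, Finset.sum_range_succ] at hprod
  rcases Nat.eq_zero_or_pos k with h0 | h0
  · subst h0
    have htop : ((2*m+2).choose (0+1+(2*m+1)) : K) = 1 := by
      rw [show 0+1+(2*m+1) = 2*m+2 by omega, Nat.choose_self]
      norm_num
    have hW := Wpol_coeff_top K p m hp
    rw [htop, hW] at hprod
    have hh : (hpol K m).coeff (2*m+1-0) = 0 := by
      rw [hpol_coeff, if_neg (by omega)]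
    rw [hh] at hprod
    rw [Nat.choose_zero_right, Nat.cast_one]
    linear_combination hprod
  · have htop : ((2*m+2).choose (k+1+(2*m+1)) : K) = 0 := by
      rw [Nat.choose_eq_zero_of_lt (by omega)]
      norm_num
    rw [htop, mul_zero, add_zero] at hprod
    rw [hprod, hpol_coeff, if_pos (by omega)]
    congr 2
    omega

lemma Zpol_coeff_window (hp : p = 6*m+5) (k : ℕ) (hk : k ≤ 2*m+1) :
    (Zpol K m).coeff (2*m+1+k) = 0 := by
  have hZ : Zpol K m = Lpol K m * (1+Polynomial.X)^(2*m+2)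
      + Polynomial.X^(2*m+1)*(1+Polynomial.X)^(4*m+3) := by
    rw [Zpol, Ppol]
    have hpw : ((1:Polynomial K)+Polynomial.X)^(4*m+3)
        = (1+Polynomial.X)^(2*m+1) * (1+Polynomial.X)^(2*m+2) := by
      rw [← pow_add]; congr 1; omega
    rw [hpw]; ring
  rw [hZ, Polynomial.coeff_add]
  have hX : (Polynomial.X^(2*m+1)*((1+Polynomial.X:Polynomial K))^(4*m+3)).coeff (2*m+1+k)
      = ((4*m+3).choose k : K) := by
    rw [show 2*m+1+k = k + (2*m+1) by omega, Polynomial.coeff_X_pow_mul, coeff_one_add_X_pow]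
  have hL : (Lpol K m * (1+Polynomial.X)^(2*m+2)).coeff (2*m+1+k)
      = -((4*m+3).choose k : K) := by
    rw [Lpol, neg_mul, Finset.sum_mul, Polynomial.coeff_neg, Polynomial.finset_sum_coeff]
    have hterm : ∀ j ∈ range (2*m+1),
        (Polynomial.C ((Wpol K m).coeff (2*m-j)) * Polynomial.X^j
          * (1+Polynomial.X)^(2*m+2)).coeff (2*m+1+k)
        = (Wpol K m).coeff (2*m-j) * ((2*m+2).choose (2*m+1+k-j) : K) := by
      intro j hj
      have hj' : j ≤ 2*m := by have := Finset.mem_range.mp hj; omega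
      rw [mul_assoc, coeff_C_mul_X_pow_mul K _ j _ _ (by omega), coeff_one_add_X_pow]
    rw [Finset.sum_congr rfl hterm]
    have hrefl := Finset.sum_range_reflect
      (fun i => (Wpol K m).coeff i * ((2*m+2).choose (k+1+i) : K)) (2*m+1)
    have hmatch : ∑ j ∈ range (2*m+1),
        (Wpol K m).coeff (2*m-j) * ((2*m+2).choose (2*m+1+k-j) : K)
        = ∑ j ∈ range (2*m+1),
          (Wpol K m).coeff (2*m+1-1-j) * ((2*m+2).choose (k+1+(2*m+1-1-j)) : K) := by
      apply Finset.sum_congr rfl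
      intro j hj
      have hj' : j < 2*m+1 := Finset.mem_range.mp hj
      rw [show 2*m+1-1-j = 2*m-j by omega, show k+1+(2*m-j) = 2*m+1+k-j by omega]
    rw [hmatch, hrefl, core K p m hp k hk]
  rw [hX, hL]
  ring

lemma natDegree_Lpol : (Lpol K m).natDegree ≤ 2*m := by
  rw [Lpol, natDegree_neg]
  apply natDegree_sum_le_of_forall_le
  intro j hj
  exact (natDegree_C_mul_X_pow_le _ _).trans (by have := Finset.mem_range.mp hj; omega)

lemma natDegree_onePlusX_pow (N : ℕ) :
    ((1+Polynomial.X : Polynomial K)^N).natDegree ≤ N := by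
  apply (natDegree_pow_le).trans
  have h1 : (1+Polynomial.X : Polynomial K).natDegree ≤ 1 :=
    (natDegree_add_le _ _).trans (by simp)
  calc N * (1+Polynomial.X : Polynomial K).natDegree ≤ N * 1 := Nat.mul_le_mul_left N h1
    _ = N := by omega

lemma natDegree_Ppol : (Ppol K m).natDegree ≤ 4*m+2 := by
  rw [Ppol]
  apply (natDegree_add_le _ _).trans
  apply max_le ((natDegree_Lpol K m).trans (by omega))
  apply (natDegree_mul_le).trans
  have h1 := natDegree_onePlusX_pow K (2*m+1)
  simp only [natDegree_X_pow]
  omega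

lemma natDegree_Zpol : (Zpol K m).natDegree ≤ 6*m+4 := by
  rw [Zpol]
  apply (natDegree_mul_le).trans
  have h1 := natDegree_Ppol K m
  have h2 := natDegree_onePlusX_pow K (2*m+2)
  omega

lemma Zsplit : Zpol K m = Rpol K m + Polynomial.X^(4*m+3) * Mpol K m :=
  (modByMonic_add_div (Zpol K m) (Polynomial.X^(4*m+3))).symm

lemma natDegree_Rpol (hp : p = 6*m+5) : (Rpol K m).natDegree ≤ 2*m := by
  rw [Polynomial.natDegree_le_iff_coeff_eq_zero]
  intro N hN
  rcases lt_or_ge N (4*m+3) with hlt | hge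
  · have hwin := Zpol_coeff_window K p m hp (N - (2*m+1)) (by omega)
    rw [show 2*m+1 + (N - (2*m+1)) = N by omega] at hwin
    have hsplit := congrArg (fun q => q.coeff N) (Zsplit K m)
    simp only [Polynomial.coeff_add, Polynomial.coeff_X_pow_mul'] at hsplit
    rw [if_neg (by omega), hwin] at hsplit
    linear_combination -hsplit
  · have hdeg : (Rpol K m).degree < ((4*m+3 : ℕ) : WithBot ℕ) := by
      have hd := degree_modByMonic_lt (Zpol K m) (monic_X_pow (R := K) (4*m+3))
      rwa [degree_X_pow] at hd
    apply Polynomial.coeff_eq_zero_of_degree_lt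
    exact hdeg.trans_le (by exact_mod_cast hge)

lemma natDegree_Mpol (hp : p = 6*m+5) : (Mpol K m).natDegree ≤ 2*m+1 := by
  rw [Polynomial.natDegree_le_iff_coeff_eq_zero]
  intro N hN
  have hsplit := congrArg (fun q => q.coeff (N + (4*m+3))) (Zsplit K m)
  simp only [Polynomial.coeff_add, Polynomial.coeff_X_pow_mul] at hsplit
  have hZ : (Zpol K m).coeff (N + (4*m+3)) = 0 :=
    Polynomial.coeff_eq_zero_of_natDegree_lt ((natDegree_Zpol K m).trans_lt (by omega))
  have hR : (Rpol K m).coeff (N + (4*m+3)) = 0 :=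
    Polynomial.coeff_eq_zero_of_natDegree_lt ((natDegree_Rpol K p m hp).trans_lt (by omega))
  rw [hZ, hR, zero_add] at hsplit
  exact hsplit.symm

lemma key (hp : p = 6*m+5) :
    Lpol K m + Polynomial.X^(2*m+1)*(1+Polynomial.X)^(2*m+1)
      = Rpol K m * (1+Polynomial.X)^(4*m+3) + Polynomial.X^(4*m+3) * Tpol K m := by
  have hchar : ((1:Polynomial K) + Polynomial.X)^(6*m+5)
      = 1 + Polynomial.X^(6*m+5) := by
    rw [← hp]
    simpa using add_pow_char (R := Polynomial K) (x := (1 : Polynomial K)) (y := Polynomial.X) (p := p)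
  have hcalc : Rpol K m * (1+Polynomial.X)^(4*m+3) + Polynomial.X^(4*m+3) * Tpol K m
      = Zpol K m * (1+Polynomial.X)^(4*m+3) - Polynomial.X^(6*m+5) * Ppol K m := by
    rw [Tpol, Zsplit K m]
    ring
  rw [hcalc, Zpol]
  have hpow : (Ppol K m * (1+Polynomial.X)^(2*m+2)) * (1+Polynomial.X)^(4*m+3)
      = Ppol K m * (1+Polynomial.X)^(6*m+5) := by
    rw [mul_assoc, ← pow_add]
    congr 2
    omega
  rw [hpow, hchar]
  simp only [Ppol]
  ring

lemma natDegree_Tpol (hp : p = 6*m+5) : (Tpol K m).natDegree ≤ 2*m := by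
  rw [Polynomial.natDegree_le_iff_coeff_eq_zero]
  intro N hN
  have hkey := congrArg (fun q => q.coeff (N + (4*m+3))) (key K p m hp)
  simp only [Polynomial.coeff_add, Polynomial.coeff_X_pow_mul] at hkey
  have h1 : (Lpol K m).coeff (N + (4*m+3)) = 0 :=
    Polynomial.coeff_eq_zero_of_natDegree_lt ((natDegree_Lpol K m).trans_lt (by omega))
  have h2 : (Polynomial.X^(2*m+1)*((1+Polynomial.X:Polynomial K))^(2*m+1)).coeff (N + (4*m+3)) = 0 := by
    apply Polynomial.coeff_eq_zero_of_natDegree_lt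
    apply natDegree_mul_le.trans_lt
    have := natDegree_onePlusX_pow K (2*m+1)
    simp only [natDegree_X_pow]
    omega
  have h3 : (Rpol K m * ((1+Polynomial.X:Polynomial K))^(4*m+3)).coeff (N + (4*m+3)) = 0 := by
    apply Polynomial.coeff_eq_zero_of_natDegree_lt
    apply natDegree_mul_le.trans_lt
    have ha := natDegree_Rpol K p m hp
    have hb := natDegree_onePlusX_pow K (4*m+3)
    omega
  rw [h1, h2, h3] at hkey
  simpa using hkey.symm


noncomputable def hommv (f : Polynomial K) (d : ℕ) : MvPolynomial (Fin 2) K :=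
  ∑ j ∈ range (d+1),
    MvPolynomial.C (f.coeff j) * (MvPolynomial.X 0)^j * (MvPolynomial.X 1)^(d-j)

lemma hommv_eval (f : Polynomial K) (d : ℕ) (hf : f.natDegree ≤ d) :
    algebraMap (MvPolynomial (Fin 2) K) (FractionRing (MvPolynomial (Fin 2) K)) (hommv K f d)
      = (algebraMap (MvPolynomial (Fin 2) K) (FractionRing (MvPolynomial (Fin 2) K))
          (MvPolynomial.X 1))^d *
        Polynomial.eval₂
          ((algebraMap (MvPolynomial (Fin 2) K) (FractionRing (MvPolynomial (Fin 2) K))).comp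
            (MvPolynomial.C : K →+* MvPolynomial (Fin 2) K))
          (algebraMap (MvPolynomial (Fin 2) K) (FractionRing (MvPolynomial (Fin 2) K))
              (MvPolynomial.X 0) /
            algebraMap (MvPolynomial (Fin 2) K) (FractionRing (MvPolynomial (Fin 2) K))
              (MvPolynomial.X 1)) f := by
  set φ := algebraMap (MvPolynomial (Fin 2) K) (FractionRing (MvPolynomial (Fin 2) K)) with hφ
  set a := φ (MvPolynomial.X 0) with ha
  set b := φ (MvPolynomial.X 1) with hb'
  have hinj : Function.Injective φ :=
    IsFractionRing.injective (MvPolynomial (Fin 2) K) (FractionRing (MvPolynomial (Fin 2) K))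
  have hb : b ≠ 0 := by
    intro h
    exact MvPolynomial.X_ne_zero 1 (hinj (by simpa using h))
  rw [hommv, map_sum, Polynomial.eval₂_eq_sum_range' _ (lt_of_le_of_lt hf (Nat.lt_succ_self d)),
    Finset.mul_sum]
  apply Finset.sum_congr rfl
  intro j hj
  have hj' : j ≤ d := by have := Finset.mem_range.mp hj; omega
  rw [map_mul, map_mul, map_pow, map_pow, RingHom.comp_apply]
  have hsplit : b^d = b^j * b^(d-j) := by rw [← pow_add]; congr 1; omega
  rw [div_pow, hsplit]
  have hcan : b^j * (a^j / b^j) = a^j := by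
    rw [mul_div_assoc', mul_div_cancel_left₀ _ (pow_ne_zero j hb)]
  calc φ (MvPolynomial.C (f.coeff j)) * a^j * b^(d-j)
      = (b^j * (a^j / b^j)) * (φ (MvPolynomial.C (f.coeff j)) * b^(d-j)) := by rw [hcan]; ring
    _ = b^j * b^(d-j) * (φ (MvPolynomial.C (f.coeff j)) * (a^j / b^j)) := by ring

lemma bivar (hp : p = 6*m+5) :
    (MvPolynomial.X 0 : MvPolynomial (Fin 2) K)^(2*m+1) * (MvPolynomial.X 1)^(2*m+1)
        * (MvPolynomial.X 0 + MvPolynomial.X 1)^(2*m+1)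
      + (MvPolynomial.X 1)^(4*m+3) * hommv K (Lpol K m) (2*m)
    = hommv K (Rpol K m) (2*m) * (MvPolynomial.X 0 + MvPolynomial.X 1)^(4*m+3)
      + (MvPolynomial.X 0)^(4*m+3) * hommv K (Tpol K m) (2*m) := by
  set φ := algebraMap (MvPolynomial (Fin 2) K) (FractionRing (MvPolynomial (Fin 2) K)) with hφ
  have hinj : Function.Injective φ :=
    IsFractionRing.injective (MvPolynomial (Fin 2) K) (FractionRing (MvPolynomial (Fin 2) K))
  apply hinj
  set a := φ (MvPolynomial.X 0) with ha
  set b := φ (MvPolynomial.X 1) with hb'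
  have hb : b ≠ 0 := by
    intro h
    exact MvPolynomial.X_ne_zero 1 (hinj (by simpa using h))
  set ψ := φ.comp (MvPolynomial.C : K →+* MvPolynomial (Fin 2) K) with hψ
  set x := a / b with hx
  have hbx : b * x = a := mul_div_cancel₀ a hb
  have hbx1 : b * (1 + x) = a + b := by rw [mul_add, mul_one, hbx]; ring
  -- evaluate the key identity
  have base := congrArg (Polynomial.eval₂RingHom ψ x) (key K p m hp)
  simp only [coe_eval₂RingHom, Polynomial.eval₂_add, Polynomial.eval₂_mul,
    Polynomial.eval₂_pow, Polynomial.eval₂_X, Polynomial.eval₂_one, map_add, map_mul,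
    map_pow, map_one] at base
  set eL := Polynomial.eval₂ ψ x (Lpol K m) with heL
  set eR := Polynomial.eval₂ ψ x (Rpol K m) with heR
  set eT := Polynomial.eval₂ ψ x (Tpol K m) with heT
  have hA1 : a^(2*m+1) = b^(2*m+1) * x^(2*m+1) := by rw [← mul_pow, hbx]
  have hAB1 : (a+b)^(2*m+1) = b^(2*m+1) * (1+x)^(2*m+1) := by rw [← mul_pow, hbx1]
  have hA2 : a^(4*m+3) = b^(4*m+3) * x^(4*m+3) := by rw [← mul_pow, hbx]
  have hAB2 : (a+b)^(4*m+3) = b^(4*m+3) * (1+x)^(4*m+3) := by rw [← mul_pow, hbx1]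
  -- now rewrite the goal
  simp only [map_add, map_mul, map_pow]
  rw [hommv_eval K (Lpol K m) (2*m) (natDegree_Lpol K m),
    hommv_eval K (Rpol K m) (2*m) (natDegree_Rpol K p m hp),
    hommv_eval K (Tpol K m) (2*m) (natDegree_Tpol K p m hp)]
  rw [← hφ, ← ha, ← hb', ← hψ, ← hx, ← heL, ← heR, ← heT]
  rw [hA1, hAB1, hA2, hAB2]
  linear_combination (b^(6*m+3)) * base

end Stmt3Aux

open Stmt3Aux in
theorem stmt_3 (K : Type*) [Field K] (p m : ℕ) [Fact p.Prime] [CharP K p]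
    (hp : p = 6 * m + 5)
    (A B : MvPolynomial (Fin 2) K) (hA : A = X 0) (hB : B = X 1) :
    (A * B * (A + B)) ^ (2 * m + 1) ∈
      Ideal.span {A ^ (4 * m + 3), B ^ (4 * m + 3), (A + B) ^ (4 * m + 3)} := by
  subst hA hB
  have hid := bivar K p m hp
  have hexp : (X 0 * X 1 * (X 0 + X 1) : MvPolynomial (Fin 2) K) ^ (2 * m + 1)
      = hommv K (Rpol K m) (2*m) * (X 0 + X 1)^(4*m+3)
        + (X 0)^(4*m+3) * hommv K (Tpol K m) (2*m)
        - (X 1)^(4*m+3) * hommv K (Lpol K m) (2*m) := by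
    rw [mul_pow, mul_pow]
    linear_combination hid
  rw [hexp]
  refine Ideal.sub_mem _ (Ideal.add_mem _ ?_ ?_) ?_
  · exact Ideal.mul_mem_left _ _ (Ideal.subset_span (by simp))
  · exact Ideal.mul_mem_right _ _ (Ideal.subset_span (by simp))
  · exact Ideal.mul_mem_right _ _ (Ideal.subset_span (by simp))
end

section
/- Let K[A,B] be a polynomial ring over a field K of characteristic p = nk+δ with n ≥ 4, k ≥ 1, 2 ≤ δ ≤ n-1. Then (AB)^{(n-2)k}(A+B)^k lies in the ideal (A^{(n-1)k+1}, B^{(n-1)k+1}, (A+B)^{(n-1)k+1}). -/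
open MvPolynomial

open Polynomial in
private theorem keyInj {K : Type*} [Field K] (p N s k M : ℕ) [Fact p.Prime] [CharP K p]
    (hNs : N + s = p) (hks : k + 1 ≤ s) (hskN : s + k ≤ N) (hMN : M + k + 1 = N)
    (hedge : s + k = N → k = 1 ∧ 3 ≤ s)
    (w : ℕ → K)
    (hw : ∀ m < M, ∑ i ∈ Finset.range (k+1), w i * (N.choose (m+1+i) : K) = 0) :
    ∀ i ≤ k, w i = 0 := by
  classical
  haveI : CharP K[X] p := charP_of_injective_algebraMap' K (A := K[X]) p
  have hNp : N < p := by omega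
  have hkN : k < N := by omega
  have hnz : ∀ a : ℕ, 0 < a → a < p → (a : K) ≠ 0 := by
    intro a ha hap h0
    rw [CharP.cast_eq_zero_iff K p] at h0
    exact absurd (Nat.le_of_dvd ha h0) (by omega)
  set W : K[X] := ∑ i ∈ Finset.range (k+1), Polynomial.C (w i) * Polynomial.X ^ (k - i) with hW
  have hWdeg : W.natDegree ≤ k := by
    apply Polynomial.natDegree_sum_le_of_forall_le
    intro i hi
    exact (Polynomial.natDegree_C_mul_le _ _).trans (by rw [Polynomial.natDegree_X_pow]; omega)
  set F : K[X] := W * (Polynomial.X + 1) ^ N with hF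
  have hFwin : ∀ j, k < j → j < N → F.coeff j = 0 := by
    intro j hkj hjN
    have hcoeff : F.coeff j = ∑ i ∈ Finset.range (k+1), w i * (N.choose (j - (k - i)) : K) := by
      rw [hF, hW, Finset.sum_mul, Polynomial.finset_sum_coeff]
      refine Finset.sum_congr rfl fun i hi => ?_
      simp only [Finset.mem_range] at hi
      rw [mul_right_comm, Polynomial.coeff_mul_X_pow', if_pos (by omega), Polynomial.coeff_C_mul,
        Polynomial.coeff_X_add_one_pow]
    rw [hcoeff]
    have heq : ∀ i ∈ Finset.range (k+1), w i * (N.choose (j - (k - i)) : K)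
         = w i * (N.choose ((j - k - 1) + 1 + i) : K) := by
      intro i hi; simp only [Finset.mem_range] at hi
      congr 3
      omega
    rw [Finset.sum_congr rfl heq]
    exact hw (j - k - 1) (by omega)
  have hXp : (Polynomial.X + 1 : K[X]) ^ p = Polynomial.X ^ p + 1 := by
    have := add_pow_char (p := p) (Polynomial.X : K[X]) 1
    rwa [one_pow] at this
  have hsys : ∀ j, k < j → j < N →
      ∑ t ∈ Finset.range (k+1), F.coeff t * (s.choose (j - t) : K) = 0 := by
    intro j hkj hjN
    have hE : (F * (Polynomial.X + 1) ^ s).coeff j = 0 := by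
      have hmul : F * (Polynomial.X + 1) ^ s = W * Polynomial.X ^ p + W := by
        rw [hF, mul_assoc, ← pow_add, hNs, hXp, mul_add, mul_one]
      rw [hmul, Polynomial.coeff_add, Polynomial.coeff_mul_X_pow', if_neg (by omega),
        Polynomial.coeff_eq_zero_of_natDegree_lt (lt_of_le_of_lt hWdeg hkj), add_zero]
    have hE2 : (F * (Polynomial.X + 1) ^ s).coeff j
        = ∑ t ∈ Finset.range (j+1), F.coeff t * (s.choose (j - t) : K) := by
      rw [Polynomial.coeff_mul, Finset.Nat.sum_antidiagonal_eq_sum_range_succ_mk]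
      exact Finset.sum_congr rfl fun t ht => by rw [Polynomial.coeff_X_add_one_pow]
    rw [hE2] at hE
    have hsplit : ∑ t ∈ Finset.range (j+1), F.coeff t * (s.choose (j - t) : K)
        = (∑ t ∈ Finset.range (k+1), F.coeff t * (s.choose (j - t) : K))
          + ∑ t ∈ Finset.Ico (k+1) (j+1), F.coeff t * (s.choose (j - t) : K) := by
      rw [Finset.range_eq_Ico, Finset.range_eq_Ico,
        Finset.sum_Ico_consecutive _ (Nat.zero_le _) (by omega : k+1 ≤ j+1)]
    have hzero : ∑ t ∈ Finset.Ico (k+1) (j+1), F.coeff t * (s.choose (j - t) : K) = 0 := by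
      refine Finset.sum_eq_zero fun t ht => ?_
      simp only [Finset.mem_Ico] at ht
      rw [hFwin t (by omega) (by omega), zero_mul]
    rw [hsplit, hzero, add_zero] at hE
    exact hE
  have hcoeff_low : ∀ t ≤ k, F.coeff t = 0 := by
    rcases lt_or_eq_of_le hskN with hlt | heq
    · have key : ∀ r, ∀ t, t ≤ k → k - t < r → F.coeff t = 0 := by
        intro r
        induction r with
        | zero => intro t ht h; omega
        | succ r ih =>
          intro t ht h
          have hj := hsys (s + t) (by omega) (by omega)
          have hone : ∑ t' ∈ Finset.range (k+1), F.coeff t' * (s.choose (s + t - t') : K)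
              = F.coeff t := by
            rw [Finset.sum_eq_single t]
            · rw [(by omega : s + t - t = s), Nat.choose_self, Nat.cast_one, mul_one]
            · intro t' ht' hne
              simp only [Finset.mem_range] at ht'
              rcases lt_or_gt_of_ne hne with hlt' | hgt'
              · rw [Nat.choose_eq_zero_of_lt (by omega), Nat.cast_zero, mul_zero]
              · rw [ih t' (by omega) (by omega), zero_mul]
            · intro habs
              exact absurd (Finset.mem_range.2 (by omega)) habs
          rw [hone] at hj
          exact hj
      intro t ht
      exact key (k+1) t ht (by omega)
    · obtain ⟨hk1, hs3⟩ := hedge heq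
      subst hk1
      have h2 := hsys 2 (by omega) (by omega)
      have h3 := hsys 3 (by omega) (by omega)
      rw [Finset.sum_range_succ, Finset.sum_range_one] at h2 h3
      norm_num at h2 h3
      -- h2 : F.coeff 0 * (s.choose 2) + F.coeff 1 * s = 0
      -- h3 : F.coeff 0 * (s.choose 3) + F.coeff 1 * (s.choose 2) = 0
      have hsne : (s : K) ≠ 0 := hnz s (by omega) (by omega)
      have hA := Nat.choose_succ_right_eq s 1
      rw [Nat.choose_one_right] at hA
      norm_num at hA
      -- hA : s.choose 2 * 2 = s * (s - 1)
      have hv2 : ((s.choose 2 : ℕ) : K) * 2 = (s : K) * ((s : K) - 1) := by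
        have h' := congrArg (fun x : ℕ => (x : K)) hA
        push_cast [Nat.cast_sub (show (1:ℕ) ≤ s by omega)] at h'
        exact h'
      have hB := Nat.choose_succ_right_eq s 2
      norm_num at hB
      -- hB : s.choose 3 * 3 = s.choose 2 * (s - 2)
      have hw3 : ((s.choose 3 : ℕ) : K) * 3 = ((s.choose 2 : ℕ) : K) * ((s : K) - 2) := by
        have h' := congrArg (fun x : ℕ => (x : K)) hB
        push_cast [Nat.cast_sub (show (2:ℕ) ≤ s by omega)] at h'
        exact h'
      have hsm1 : ((s : K) - 1) ≠ 0 := by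
        have h1 : ((s - 1 : ℕ) : K) ≠ 0 := hnz (s-1) (by omega) (by omega)
        rwa [Nat.cast_sub (by omega : 1 ≤ s), Nat.cast_one] at h1
      have htwo : (2 : K) ≠ 0 := by
        have h2' := hnz 2 (by omega) (by omega)
        exact_mod_cast h2'
      have hvne : ((s.choose 2 : ℕ) : K) ≠ 0 := by
        intro h0
        rw [h0, zero_mul] at hv2
        exact (mul_ne_zero hsne hsm1) hv2.symm
      set g0 := F.coeff 0
      set g1 := F.coeff 1
      have e3 : g0 * ((s:K) - 2) + 3 * g1 = 0 := by
        have h3' : ((s.choose 2 : ℕ) : K) * (g0 * ((s:K) - 2) + 3 * g1) = 0 := by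
          linear_combination (3:K) * h3 - g0 * hw3
        exact (mul_eq_zero.mp h3').resolve_left hvne
      have e2 : g0 * ((s:K) - 1) + 2 * g1 = 0 := by
        have h2' : (s : K) * (g0 * ((s:K) - 1) + 2 * g1) = 0 := by
          linear_combination (2:K) * h2 - g0 * hv2
        exact (mul_eq_zero.mp h2').resolve_left hsne
      have hg0 : g0 = 0 := by
        have hcomb : g0 * ((s:K) + 1) = 0 := by linear_combination (3:K) * e2 - 2 * e3
        have hsp1 : ((s:K) + 1) ≠ 0 := by
          have h1 : ((s + 1 : ℕ) : K) ≠ 0 := hnz (s+1) (by omega) (by omega)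
          rwa [Nat.cast_add, Nat.cast_one] at h1
        exact (mul_eq_zero.mp hcomb).resolve_right hsp1
      have hg1 : g1 = 0 := by
        have h2g : (2:K) * g1 = 0 := by linear_combination e2 - ((s:K) - 1) * hg0
        exact (mul_eq_zero.mp h2g).resolve_left htwo
      intro t ht
      interval_cases t
      · exact hg0
      · exact hg1
  have hcoeffN : ∀ t < N, F.coeff t = 0 := by
    intro t ht
    rcases le_or_gt t k with h | h
    · exact hcoeff_low t h
    · exact hFwin t h ht
  have hdvd : (Polynomial.X : K[X]) ^ N ∣ F := Polynomial.X_pow_dvd_iff.mpr hcoeffN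
  rw [hF] at hdvd
  have hcop : IsCoprime ((Polynomial.X : K[X]) ^ N) ((Polynomial.X + 1) ^ N) :=
    IsCoprime.pow (⟨-1, 1, by ring⟩ : IsCoprime (Polynomial.X : K[X]) (Polynomial.X + 1))
  have hWdvd : (Polynomial.X : K[X]) ^ N ∣ W := hcop.dvd_of_dvd_mul_right hdvd
  have hW0 : W = 0 := by
    by_contra h0
    have := Polynomial.natDegree_le_of_dvd hWdvd h0
    rw [Polynomial.natDegree_X_pow] at this
    omega
  intro i hik
  have hcw : W.coeff (k - i) = w i := by
    rw [hW, Polynomial.finset_sum_coeff]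
    rw [Finset.sum_eq_single i]
    · rw [Polynomial.coeff_C_mul, Polynomial.coeff_X_pow, if_pos rfl, mul_one]
    · intro i' hi' hne
      simp only [Finset.mem_range] at hi'
      rw [Polynomial.coeff_C_mul, Polynomial.coeff_X_pow, if_neg (by omega), mul_zero]
    · intro habs
      exact absurd (Finset.mem_range.2 (by omega)) habs
  rw [hW0, Polynomial.coeff_zero] at hcw
  exact hcw.symm

open Matrix in
private theorem existsSolution {K : Type*} [Field K] (p N s k M : ℕ) [Fact p.Prime] [CharP K p]
    (hNs : N + s = p) (hks : k + 1 ≤ s) (hskN : s + k ≤ N) (hMN : M + k + 1 = N)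
    (hedge : s + k = N → k = 1 ∧ 3 ≤ s) :
    ∃ c : ℕ → K, ∀ i ≤ k,
      ∑ m ∈ Finset.range M, c m * (N.choose (m+1+i) : K) = (k.choose i : K) := by
  classical
  set T : Matrix (Fin (k+1)) (Fin M) K :=
    fun i m => (N.choose ((m:ℕ)+1+(i:ℕ)) : K) with hT
  have hinj : Function.Injective (Matrix.mulVecLin Tᵀ) := by
    rw [← LinearMap.ker_eq_bot, LinearMap.ker_eq_bot']
    intro w hw0
    set w' : ℕ → K := fun i => if h : i < k+1 then w ⟨i, h⟩ else 0 with hw'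
    have hww : ∀ m < M, ∑ i ∈ Finset.range (k+1), w' i * (N.choose (m+1+i) : K) = 0 := by
      intro m hm
      have hrow : Tᵀ.mulVec w ⟨m, hm⟩ = 0 := by
        have h0 := congrFun hw0 ⟨m, hm⟩
        rwa [Matrix.mulVecLin_apply, Pi.zero_apply] at h0
      have hdef : Tᵀ.mulVec w ⟨m, hm⟩ = ∑ i : Fin (k+1), T i ⟨m, hm⟩ * w i := rfl
      rw [← Fin.sum_univ_eq_sum_range (fun i => w' i * (N.choose (m+1+i) : K)) (k+1)]
      calc ∑ i : Fin (k+1), w' (i:ℕ) * (N.choose (m+1+(i:ℕ)) : K)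
          = ∑ i : Fin (k+1), T i ⟨m, hm⟩ * w i := by
            refine Finset.sum_congr rfl fun i _ => ?_
            rw [hw']
            simp only [i.isLt, dif_pos, Fin.eta, hT]
            ring
        _ = 0 := by rw [← hdef]; exact hrow
    have hz := keyInj p N s k M hNs hks hskN hMN hedge w' hww
    funext i
    have h := hz i (Nat.lt_succ_iff.mp i.isLt)
    rw [hw'] at h
    simp only [i.isLt, dif_pos, Fin.eta] at h
    simpa using h
  have h1 : Tᵀ.rank = k + 1 := by
    show Module.finrank K (LinearMap.range Tᵀ.mulVecLin) = k + 1
    rw [LinearMap.finrank_range_of_inj hinj, Module.finrank_fin_fun]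
  have hrankT : T.rank = k + 1 := by
    rw [← Matrix.rank_transpose]
    exact h1
  have hsurj : Function.Surjective (Matrix.mulVecLin T) := by
    rw [← LinearMap.range_eq_top]
    apply Submodule.eq_top_of_finrank_eq
    rw [Module.finrank_fin_fun]
    exact hrankT
  obtain ⟨c, hc⟩ := hsurj (fun i => (k.choose (i:ℕ) : K))
  refine ⟨fun m => if h : m < M then c ⟨m, h⟩ else 0, ?_⟩
  intro i hik
  have hi' : i < k + 1 := by omega
  have hrow : T.mulVec c ⟨i, hi'⟩ = (k.choose i : K) := by
    have h0 := congrFun hc ⟨i, hi'⟩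
    rw [Matrix.mulVecLin_apply] at h0
    exact h0
  have hdef : T.mulVec c ⟨i, hi'⟩ = ∑ m : Fin M, T ⟨i, hi'⟩ m * c m := rfl
  rw [← Fin.sum_univ_eq_sum_range
    (fun m => (if h : m < M then c ⟨m, h⟩ else 0) * (N.choose (m+1+i) : K)) M]
  calc ∑ m : Fin M, (if h : (m:ℕ) < M then c ⟨(m:ℕ), h⟩ else 0) * (N.choose ((m:ℕ)+1+i) : K)
      = ∑ m : Fin M, T ⟨i, hi'⟩ m * c m := by
        refine Finset.sum_congr rfl fun m _ => ?_
        simp only [m.isLt, dif_pos, Fin.eta, hT]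
        ring
    _ = (k.choose i : K) := by rw [← hdef]; exact hrow

private theorem assemble {K : Type*} [CommRing K] {R : Type*} [CommRing R] [Algebra K R]
    (A B : R) (N M k : ℕ) (hMN : M + k + 1 = N) (hM1 : 1 ≤ M)
    (c : ℕ → K)
    (hc : ∀ i ≤ k, ∑ m ∈ Finset.range M, c m * (N.choose (m+1+i) : K) = (k.choose i : K)) :
    (A*B)^M * (A+B)^k ∈ Ideal.span {A^N, B^N, (A+B)^N} := by
  classical
  set I := Ideal.span {A^N, B^N, (A+B)^N} with hI
  have hUN : (A+B)^N ∈ I := Ideal.subset_span (by simp)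
  have hAN : A^N ∈ I := Ideal.subset_span (by simp)
  have hBN : B^N ∈ I := Ideal.subset_span (by simp)
  set t : ℕ → ℕ → R := fun m j =>
    (algebraMap K R (c m) * A^(M-1-m) * B^m) * (A^j * B^(N-j) * (N.choose j : R)) with ht
  have hγ : (∑ m ∈ Finset.range M, algebraMap K R (c m) * A^(M-1-m) * B^m) * (A+B)^N
      = ∑ m ∈ Finset.range M, ∑ j ∈ Finset.range (N+1), t m j := by
    rw [Finset.sum_mul]
    refine Finset.sum_congr rfl fun m hm => ?_
    rw [add_pow, Finset.mul_sum]
  have hsplit : ∀ m ∈ Finset.range M, ∑ j ∈ Finset.range (N+1), t m j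
      = (∑ j ∈ Finset.range (m+1), t m j)
      + ((∑ i ∈ Finset.range (k+1), t m (m+1+i))
      + (∑ r ∈ Finset.range (N - m - k - 1), t m (m+k+2+r))) := by
    intro m hm
    simp only [Finset.mem_range] at hm
    have ha : ∑ j ∈ Finset.Ico 0 (m+1), t m j = ∑ j ∈ Finset.range (m+1), t m j := by
      rw [Finset.range_eq_Ico]
    have hb : ∑ j ∈ Finset.Ico (m+1) (m+k+2), t m j = ∑ i ∈ Finset.range (k+1), t m (m+1+i) := by
      simp only [Finset.sum_Ico_eq_sum_range]
      rw [show m+k+2-(m+1) = k+1 from by omega]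
    have hcx : ∑ j ∈ Finset.Ico (m+k+2) (N+1), t m j
        = ∑ r ∈ Finset.range (N-m-k-1), t m (m+k+2+r) := by
      simp only [Finset.sum_Ico_eq_sum_range]
      rw [show N+1-(m+k+2) = N-m-k-1 from by omega]
    rw [Finset.range_eq_Ico,
       ← Finset.sum_Ico_consecutive (fun j => t m j) (Nat.zero_le (m+1)) (by omega : m+1 ≤ N+1),
       ← Finset.sum_Ico_consecutive (fun j => t m j) (by omega : m+1 ≤ m+k+2)
          (by omega : m+k+2 ≤ N+1), ha, hb, hcx, add_assoc]
  have hS1 : ∑ m ∈ Finset.range M, ∑ j ∈ Finset.range (m+1), t m j ∈ I := by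
    refine Ideal.sum_mem I fun m hm => Ideal.sum_mem I fun j hj => ?_
    simp only [Finset.mem_range] at hm hj
    have hfact : t m j = (B^m * B^(N-j)) *
        (algebraMap K R (c m) * A^(M-1-m) * (A^j * (N.choose j : R))) := by
      rw [ht]; ring
    have hpow : B^m * B^(N-j) = B^N * B^(m-j) := by
      rw [← pow_add, ← pow_add]; congr 1; omega
    rw [hfact, hpow, mul_assoc]
    exact Ideal.mul_mem_right _ I hBN
  have hS3 : ∑ m ∈ Finset.range M,
      ∑ r ∈ Finset.range (N - m - k - 1), t m (m+k+2+r) ∈ I := by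
    refine Ideal.sum_mem I fun m hm => Ideal.sum_mem I fun r hr => ?_
    simp only [Finset.mem_range] at hm hr
    have hfact : t m (m+k+2+r) = (A^(M-1-m) * A^(m+k+2+r)) *
        (algebraMap K R (c m) * B^m * (B^(N-(m+k+2+r)) * (N.choose (m+k+2+r) : R))) := by
      rw [ht]; ring
    have hpow : A^(M-1-m) * A^(m+k+2+r) = A^N * A^r := by
      rw [← pow_add, ← pow_add]; congr 1; omega
    rw [hfact, hpow, mul_assoc]
    exact Ideal.mul_mem_right _ I hAN
  have hmid : ∑ m ∈ Finset.range M, ∑ i ∈ Finset.range (k+1), t m (m+1+i)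
      = (A*B)^M * (A+B)^k := by
    rw [Finset.sum_comm]
    have hf : (A*B)^M * (A+B)^k
        = ∑ i ∈ Finset.range (k+1), (k.choose i : R) * (A^(M+i) * B^(N-1-i)) := by
      rw [add_pow, Finset.mul_sum]
      refine Finset.sum_congr rfl fun i hi => ?_
      simp only [Finset.mem_range] at hi
      rw [mul_pow, (by omega : N-1-i = M + (k-i)), pow_add, pow_add]
      ring
    rw [hf]
    refine Finset.sum_congr rfl fun i hi => ?_
    simp only [Finset.mem_range] at hi
    have hterm : ∀ m ∈ Finset.range M, t m (m+1+i)
        = algebraMap K R (c m * (N.choose (m+1+i) : K)) * (A^(M+i) * B^(N-1-i)) := by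
      intro m hm
      simp only [Finset.mem_range] at hm
      rw [map_mul, map_natCast, ht,
        (by omega : M+i = (M-1-m) + (m+1+i)),
        (by omega : N-1-i = m + (N-(m+1+i))), pow_add, pow_add]
      ring
    rw [Finset.sum_congr rfl hterm, ← Finset.sum_mul, ← map_sum]
    rw [hc i (by omega), map_natCast]
  have hsum : (∑ m ∈ Finset.range M, algebraMap K R (c m) * A^(M-1-m) * B^m) * (A+B)^N
      = (∑ m ∈ Finset.range M, ∑ j ∈ Finset.range (m+1), t m j)
        + ((A*B)^M * (A+B)^k
        + ∑ m ∈ Finset.range M, ∑ r ∈ Finset.range (N - m - k - 1), t m (m+k+2+r)) := by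
    rw [hγ, Finset.sum_congr rfl hsplit, Finset.sum_add_distrib, Finset.sum_add_distrib, hmid]
  have hfin : (A*B)^M * (A+B)^k
      = (∑ m ∈ Finset.range M, algebraMap K R (c m) * A^(M-1-m) * B^m) * (A+B)^N
        - (∑ m ∈ Finset.range M, ∑ j ∈ Finset.range (m+1), t m j)
        - ∑ m ∈ Finset.range M, ∑ r ∈ Finset.range (N - m - k - 1), t m (m+k+2+r) := by
    rw [hsum]; ring
  rw [hfin]
  exact sub_mem (sub_mem (Ideal.mul_mem_left I _ hUN) hS1) hS3

theorem stmt_5 (K : Type*) [Field K] (p n k δ : ℕ) [Fact p.Prime] [CharP K p]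
    (hn : 4 ≤ n) (hk : 1 ≤ k) (hδ : 2 ≤ δ) (hδn : δ ≤ n - 1) (hp : p = n * k + δ)
    (A B : MvPolynomial (Fin 2) K) (hA : A = X 0) (hB : B = X 1) :
    (A * B) ^ ((n - 2) * k) * (A + B) ^ k ∈
      Ideal.span {A ^ ((n - 1) * k + 1), B ^ ((n - 1) * k + 1), (A + B) ^ ((n - 1) * k + 1)} := by
  classical
  set N := (n - 1) * k + 1 with hN
  set M := (n - 2) * k with hM
  set s := k + δ - 1 with hs
  have e1 : (n - 1) * k = n * k - k := by rw [Nat.sub_mul, one_mul]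
  have e2 : (n - 2) * k = n * k - 2 * k := by rw [Nat.sub_mul]
  have e3 : (n - 3) * k = n * k - 3 * k := by rw [Nat.sub_mul]
  have e4 : 4 * k ≤ n * k := Nat.mul_le_mul_right k hn
  have e5 : n - 3 ≤ (n - 3) * k := Nat.le_mul_of_pos_right (n - 3) (by omega)
  have e6 : (n - 3) * k = (n - 3) * (k - 1) + (n - 3) := by
    have h := Nat.mul_add (n - 3) (k - 1) 1
    rw [(by omega : k - 1 + 1 = k)] at h
    rw [h, Nat.mul_one]
  have e7 : k - 1 ≤ (n - 3) * (k - 1) := Nat.le_mul_of_pos_left (k - 1) (by omega)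
  have hNs : N + s = p := by omega
  have hks : k + 1 ≤ s := by omega
  have hskN : s + k ≤ N := by omega
  have hMN : M + k + 1 = N := by omega
  have hM1 : 1 ≤ M := by omega
  have hedge : s + k = N → k = 1 ∧ 3 ≤ s := by
    intro h
    have hk1 : k = 1 := by omega
    constructor
    · exact hk1
    · omega
  obtain ⟨c, hc⟩ := existsSolution (K := K) p N s k M hNs hks hskN hMN hedge
  exact assemble A B N M k hMN hM1 c hc
end

section
/- Let T = K[A_1, ..., A_m] be a polynomial ring over a field K, and for r ≤ m let I_{r,i} = (A_1^i, ..., A_r^i). Suppose for positive integers α, β, γ and some 2 ≤ r ≤ m that (A_1⋯A_{r-1})^α (A_1+⋯+A_{r-1})^β ∈ I_{r-1, α+γ} + ((A_1+⋯+A_{r-1})^{α+γ}). Then (A_1⋯A_r)^α (A_1+⋯+A_r)^{β+γ-1} ∈ I_{r, α+γ} + ((A_1+⋯+A_r)^{α+γ}). -/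
open MvPolynomial Finset

lemma pow_mul_pow_mem_span_pair {R : Type*} [CommRing R] (u v : R) (N a b : ℕ)
    (h : 2 * N ≤ a + b + 1) : u ^ a * v ^ b ∈ Ideal.span {v ^ N, (u + v) ^ N} := by
  have hv : v ^ N ∈ Ideal.span {v ^ N, (u + v) ^ N} :=
    Ideal.subset_span (by left; rfl)
  have hw : (u + v) ^ N ∈ Ideal.span {v ^ N, (u + v) ^ N} :=
    Ideal.subset_span (by right; rfl)
  have hu : u ^ a = ((u + v) + (-v)) ^ a := by ring
  rw [hu, add_pow (u + v) (-v) a, Finset.sum_mul]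
  refine Ideal.sum_mem _ fun k hk => ?_
  rw [Finset.mem_range] at hk
  by_cases hkN : N ≤ k
  · have e : (u + v) ^ k = (u + v) ^ N * (u + v) ^ (k - N) := by
      rw [← pow_add]; congr 1; omega
    rw [e]
    exact Ideal.mul_mem_right _ _ (Ideal.mul_mem_right _ _
      (Ideal.mul_mem_right _ _ (Ideal.mul_mem_right _ _ hw)))
  · have hN : N + (a - k + b - N) = a - k + b := by omega
    have e : (u + v) ^ k * (-v) ^ (a - k) * (↑((a).choose k) : R) * v ^ b
        = ((u + v) ^ k * (-1 : R) ^ (a - k) * (↑((a).choose k) : R) * v ^ (a - k + b - N))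
            * v ^ N := by
      have : v ^ (a - k) * v ^ b = v ^ (a - k + b - N) * v ^ N := by
        rw [← pow_add, ← pow_add]; congr 1; omega
      calc (u + v) ^ k * (-v) ^ (a - k) * (↑((a).choose k) : R) * v ^ b
          = (u + v) ^ k * (-1 : R) ^ (a - k) * (↑((a).choose k) : R)
              * (v ^ (a - k) * v ^ b) := by rw [neg_pow]; ring
        _ = _ := by rw [this]; ring
    rw [e]
    exact Ideal.mul_mem_left _ _ hv

theorem stmt_6 (K : Type*) [Field K] (m r α β γ : ℕ)
    (hα : 1 ≤ α) (hβ : 1 ≤ β) (hγ : 1 ≤ γ) (hr : 2 ≤ r) (hrm : r ≤ m)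
    (A : Fin m → MvPolynomial (Fin m) K) (hA : ∀ i, A i = X i)
    (h : (∏ j ∈ Finset.univ.filter (fun j : Fin m => (j : ℕ) < r - 1), A j) ^ α *
          (∑ j ∈ Finset.univ.filter (fun j : Fin m => (j : ℕ) < r - 1), A j) ^ β ∈
        Ideal.span ((fun j : Fin m => A j ^ (α + γ)) ''
            {j | (j : ℕ) < r - 1}) +
          Ideal.span {(∑ j ∈ Finset.univ.filter (fun j : Fin m => (j : ℕ) < r - 1), A j) ^ (α + γ)}) :
    (∏ j ∈ Finset.univ.filter (fun j : Fin m => (j : ℕ) < r), A j) ^ α *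
        (∑ j ∈ Finset.univ.filter (fun j : Fin m => (j : ℕ) < r), A j) ^ (β + γ - 1) ∈
      Ideal.span ((fun j : Fin m => A j ^ (α + γ)) '' {j | (j : ℕ) < r}) +
        Ideal.span {(∑ j ∈ Finset.univ.filter (fun j : Fin m => (j : ℕ) < r), A j) ^ (α + γ)} := by
  classical
  have hm : r - 1 < m := by omega
  set i0 : Fin m := ⟨r - 1, hm⟩ with hi0
  have hnot : i0 ∉ Finset.univ.filter (fun j : Fin m => (j : ℕ) < r - 1) := by
    simp [hi0]
  have hfilter : Finset.univ.filter (fun j : Fin m => (j : ℕ) < r)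
      = insert i0 (Finset.univ.filter (fun j : Fin m => (j : ℕ) < r - 1)) := by
    ext j
    simp only [Finset.mem_insert, Finset.mem_filter, Finset.mem_univ, true_and, Fin.ext_iff, hi0]
    omega
  rw [hfilter, Finset.sum_insert hnot, Finset.prod_insert hnot]
  set x := A i0 with hx
  set P := ∏ j ∈ Finset.univ.filter (fun j : Fin m => (j : ℕ) < r - 1), A j with hPdef
  set S := ∑ j ∈ Finset.univ.filter (fun j : Fin m => (j : ℕ) < r - 1), A j with hSdef
  set N := α + γ with hNdef
  set J : Ideal (MvPolynomial (Fin m) K) :=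
    Ideal.span ((fun j : Fin m => A j ^ N) '' {j | (j : ℕ) < r}) with hJdef
  have hxN : x ^ N ∈ J := by
    refine Ideal.subset_span ⟨i0, ?_, rfl⟩
    simp only [Set.mem_setOf_eq, hi0]
    omega
  have hJle : Ideal.span ((fun j : Fin m => A j ^ N) '' {j | (j : ℕ) < r - 1}) ≤ J :=
    Ideal.span_mono (Set.image_mono (fun j hj => by
      simp only [Set.mem_setOf_eq] at hj ⊢; omega))
  rw [Submodule.add_eq_sup] at h ⊢
  obtain ⟨y, hy, z, hz, hyz⟩ := Submodule.mem_sup.mp h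
  obtain ⟨c, hc⟩ := Ideal.mem_span_singleton'.mp hz
  have hpair : Ideal.span {x ^ N, (S + x) ^ N} ≤ J ⊔ Ideal.span {(x + S) ^ N} := by
    rw [Ideal.span_le]
    intro w hw
    simp only [Set.mem_insert_iff, Set.mem_singleton_iff] at hw
    rcases hw with rfl | rfl
    · exact Ideal.mem_sup_left hxN
    · refine Ideal.mem_sup_right (Ideal.subset_span ?_)
      rw [add_comm S x]
      rfl
  rw [add_pow x S (β + γ - 1), Finset.mul_sum]
  refine Ideal.sum_mem _ fun k hk => ?_
  rw [Finset.mem_range] at hk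
  by_cases hkγ : γ ≤ k
  · have hd : x ^ N ∣ x ^ (α + k) := pow_dvd_pow _ (by omega)
    obtain ⟨c2, hc2⟩ := hd
    have e : (x * P) ^ α * (x ^ k * S ^ (β + γ - 1 - k) * ↑((β + γ - 1).choose k))
        = P ^ α * S ^ (β + γ - 1 - k) * (↑((β + γ - 1).choose k) : MvPolynomial (Fin m) K)
            * x ^ (α + k) := by
      rw [mul_pow, pow_add]; ring
    rw [e, hc2]
    exact Ideal.mem_sup_left (Ideal.mul_mem_left _ _ (Ideal.mul_mem_right _ _ hxN))
  · have e : (x * P) ^ α * (x ^ k * S ^ (β + γ - 1 - k) * ↑((β + γ - 1).choose k))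
        = (↑((β + γ - 1).choose k) : MvPolynomial (Fin m) K) * x ^ (α + k) * S ^ (γ - 1 - k)
            * (P ^ α * S ^ β) := by
      have h1 : β + γ - 1 - k = β + (γ - 1 - k) := by omega
      rw [mul_pow, h1, pow_add, pow_add]; ring
    rw [e, ← hyz, ← hc, mul_add]
    refine Ideal.add_mem _ ?_ ?_
    · exact Ideal.mem_sup_left (Ideal.mul_mem_left _ _ (hJle hy))
    · have e2 : (↑((β + γ - 1).choose k) : MvPolynomial (Fin m) K) * x ^ (α + k)
            * S ^ (γ - 1 - k) * (c * S ^ N)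
          = (↑((β + γ - 1).choose k) * c) * (S ^ (N + (γ - 1 - k)) * x ^ (α + k)) := by
        rw [pow_add]; ring
      rw [e2]
      exact hpair (Ideal.mul_mem_left _ _
        (pow_mul_pow_mem_span_pair S x N _ _ (by omega)))
end

section
/- For nonnegative integers n, a, k, the determinant of the (k+1)×(k+1) matrix whose (i,j) entry (with 0 ≤ i,j ≤ k) is the binomial coefficient C(n, a+k-i+j) equals the product ∏_{t=0}^{k} C(n+t, a+k) divided by ∏_{t=0}^{k} C(a+k+t, a+k). -/
open Finset

private lemma aux_sum_vdm (n m k j i : ℕ) (hi : i ≤ k) (hk : k ≤ m) :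
    ∑ t ∈ Finset.range (k + 1), i.choose t * n.choose (m - t + j) =
      (i + n).choose (m + j) := by
  rw [Nat.add_choose_eq, Finset.Nat.sum_antidiagonal_eq_sum_range_succ_mk]
  have hsub : Finset.range (k + 1) ⊆ Finset.range (m + j + 1) :=
    Finset.range_subset_range.mpr (by omega)
  rw [← Finset.sum_subset hsub (by
    intro t ht hnt
    simp only [Finset.mem_range] at ht hnt
    have : i < t := by omega
    simp [Nat.choose_eq_zero_of_lt this])]
  apply Finset.sum_congr rfl
  intro t ht
  simp only [Finset.mem_range] at ht
  have h1 : m + j - t = m - t + j := by omega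
  simp [h1]

private lemma aux_choose_eq (m j N : ℕ) :
    ((N.choose (m + j) : ℚ)) =
      (N.choose m : ℚ) * (descPochhammer ℚ j).eval ((N : ℚ) - m) *
        ((Nat.factorial m : ℚ) / (Nat.factorial (m + j) : ℚ)) := by
  have h := descPochhammer_mul (R := ℚ) m j
  have h1 : (descPochhammer ℚ (m + j)).eval (N : ℚ) =
      (descPochhammer ℚ m).eval (N : ℚ) *
        (descPochhammer ℚ j).eval ((N : ℚ) - m) := by
    rw [← h]
    simp [Polynomial.eval_comp]
  have h2 : ∀ r : ℕ, (descPochhammer ℚ r).eval ((N : ℕ) : ℚ) =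
      (Nat.factorial r : ℚ) * N.choose r := by
    intro r
    rw [descPochhammer_eval_eq_descFactorial]
    exact_mod_cast congrArg (Nat.cast (R := ℚ)) (Nat.descFactorial_eq_factorial_mul_choose N r)
  rw [h2, h2] at h1
  have hne : (Nat.factorial (m + j) : ℚ) ≠ 0 := by exact_mod_cast (Nat.factorial_pos _).ne'
  field_simp
  linear_combination h1

theorem stmt_7 (n a k : ℕ) :
    (Matrix.of fun i j : Fin (k + 1) =>
        ((n.choose (a + k - (i : ℕ) + (j : ℕ)) : ℚ))).det =
      (∏ t ∈ Finset.range (k + 1), ((n + t).choose (a + k) : ℚ)) /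
        (∏ t ∈ Finset.range (k + 1), ((a + k + t).choose (a + k) : ℚ)) := by
  set m := a + k with hm
  have hkm : k ≤ m := by omega
  set M : Matrix (Fin (k + 1)) (Fin (k + 1)) ℚ :=
    Matrix.of fun i j : Fin (k + 1) => ((n.choose (m - (i : ℕ) + (j : ℕ)) : ℚ)) with hM
  set P : Matrix (Fin (k + 1)) (Fin (k + 1)) ℚ :=
    Matrix.of fun i t : Fin (k + 1) => (((i : ℕ).choose t : ℚ)) with hP
  set N : Matrix (Fin (k + 1)) (Fin (k + 1)) ℚ :=
    Matrix.of fun i j : Fin (k + 1) => (((n + (i : ℕ)).choose (m + (j : ℕ)) : ℚ)) with hN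
  -- Step A : P * M = N
  have hPM : P * M = N := by
    ext i j
    simp only [Matrix.mul_apply, hP, hM, hN, Matrix.of_apply]
    have key := aux_sum_vdm n m k (j : ℕ) (i : ℕ) (by omega : (i : ℕ) ≤ k) hkm
    have h2 : (n + (i : ℕ)).choose (m + (j : ℕ)) = ((i : ℕ) + n).choose (m + (j : ℕ)) := by
      rw [Nat.add_comm]
    rw [h2, ← key]
    rw [Fin.sum_univ_eq_sum_range (fun t => ((i : ℕ).choose t : ℚ) *
      (n.choose (m - t + (j : ℕ)) : ℚ))]
    push_cast
    rfl
  have hdetP : P.det = 1 := by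
    have htri : P.BlockTriangular OrderDual.toDual := by
      intro i j hij
      have hij' : (i : ℕ) < (j : ℕ) := hij
      simp [hP, Nat.choose_eq_zero_of_lt hij']
    rw [Matrix.det_of_lowerTriangular P htri]
    simp [hP]
  have hdetMN : M.det = N.det := by
    rw [← hPM, Matrix.det_mul, hdetP, one_mul]
  -- Step B : factor N
  set x : Fin (k + 1) → ℚ := fun i => (n : ℚ) + (i : ℕ) - m with hx
  set E : Matrix (Fin (k + 1)) (Fin (k + 1)) ℚ :=
    Matrix.of fun i j : Fin (k + 1) => (descPochhammer ℚ (j : ℕ)).eval (x i) with hE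
  have hNfac : N = Matrix.diagonal (fun i : Fin (k + 1) => ((n + (i : ℕ)).choose m : ℚ)) * E *
      Matrix.diagonal (fun j : Fin (k + 1) =>
        ((Nat.factorial m : ℚ) / (Nat.factorial (m + (j : ℕ)) : ℚ))) := by
    ext i j
    rw [Matrix.mul_diagonal, Matrix.diagonal_mul]
    simp only [hN, hE, Matrix.of_apply, hx]
    rw [aux_choose_eq m (j : ℕ) (n + (i : ℕ))]
    push_cast
    ring
  have hdetE : E.det = ∏ t ∈ Finset.range (k + 1), (Nat.factorial t : ℚ) := by
    have h := Matrix.det_eval_matrixOfPolynomials_eq_det_vandermonde x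
        (fun j : Fin (k + 1) => descPochhammer ℚ (j : ℕ))
        (fun j => descPochhammer_natDegree ℚ (j : ℕ))
        (fun j => monic_descPochhammer ℚ (j : ℕ))
    rw [hE, ← h]
    have hxe : x = fun i : Fin (k + 1) => ((i : ℚ)) + ((n : ℚ) - m) := by
      funext i
      simp only [hx]
      ring
    rw [hxe, Matrix.det_vandermonde_add, Matrix.det_vandermonde_id_eq_superFactorial]
    rw [← Nat.prod_range_succ_factorial]
    push_cast
    rfl
  have hdetN : N.det = (∏ t ∈ Finset.range (k + 1), ((n + t).choose m : ℚ)) *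
      (∏ t ∈ Finset.range (k + 1), (Nat.factorial t : ℚ)) *
      (∏ t ∈ Finset.range (k + 1),
        ((Nat.factorial m : ℚ) / (Nat.factorial (m + t) : ℚ))) := by
    rw [hNfac, Matrix.det_mul, Matrix.det_mul, Matrix.det_diagonal, Matrix.det_diagonal, hdetE]
    rw [Fin.prod_univ_eq_prod_range (fun t => ((n + t).choose m : ℚ)),
      Fin.prod_univ_eq_prod_range
        (fun t => ((Nat.factorial m : ℚ) / (Nat.factorial (m + t) : ℚ)))]
  -- final arithmetic
  have hBne : (∏ t ∈ Finset.range (k + 1), ((m + t).choose m : ℚ)) ≠ 0 := by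
    apply Finset.prod_ne_zero_iff.mpr
    intro t _
    exact_mod_cast (Nat.choose_pos (by omega : m ≤ m + t)).ne'
  have hFG : (∏ t ∈ Finset.range (k + 1), (Nat.factorial t : ℚ)) *
      (∏ t ∈ Finset.range (k + 1), ((Nat.factorial m : ℚ) / (Nat.factorial (m + t) : ℚ))) *
      (∏ t ∈ Finset.range (k + 1), ((m + t).choose m : ℚ)) = 1 := by
    rw [← Finset.prod_mul_distrib, ← Finset.prod_mul_distrib]
    apply Finset.prod_eq_one
    intro t _
    have hkey : (m + t).choose m * Nat.factorial m * Nat.factorial t = Nat.factorial (m + t) := by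
      have := Nat.choose_mul_factorial_mul_factorial (by omega : m ≤ m + t)
      simpa using this
    have hkeyQ : ((m + t).choose m : ℚ) * Nat.factorial m * Nat.factorial t =
        (Nat.factorial (m + t) : ℚ) := by
      exact_mod_cast congrArg (Nat.cast (R := ℚ)) hkey
    have hne : (Nat.factorial (m + t) : ℚ) ≠ 0 := by exact_mod_cast (Nat.factorial_pos _).ne'
    field_simp
    linear_combination hkeyQ
  rw [hdetMN, hdetN, eq_div_iff hBne]
  calc (∏ t ∈ Finset.range (k + 1), ((n + t).choose m : ℚ)) *
        (∏ t ∈ Finset.range (k + 1), (Nat.factorial t : ℚ)) *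
        (∏ t ∈ Finset.range (k + 1), ((Nat.factorial m : ℚ) / (Nat.factorial (m + t) : ℚ))) *
        (∏ t ∈ Finset.range (k + 1), ((m + t).choose m : ℚ))
      = (∏ t ∈ Finset.range (k + 1), ((n + t).choose m : ℚ)) *
        ((∏ t ∈ Finset.range (k + 1), (Nat.factorial t : ℚ)) *
        (∏ t ∈ Finset.range (k + 1), ((Nat.factorial m : ℚ) / (Nat.factorial (m + t) : ℚ))) *
        (∏ t ∈ Finset.range (k + 1), ((m + t).choose m : ℚ))) := by ring
    _ = _ := by rw [hFG]; ring
end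

section
/- For integers q = nk+1 with n ≥ 3, k ≥ 1, and a prime p dividing q^e for q = p^e ≡ 1 mod n: in a field of characteristic p, the binomial coefficient C((n-1)k+r, k) equals (-1)^k C(2k-r, k) for 0 ≤ r ≤ k. -/
open PowerSeries in
lemma coeff_one_sub_X_pow_aux (K : Type*) [Field K] (m k : ℕ) (hkm : k ≤ m) :
    (PowerSeries.coeff (R := K) k) ((1 - PowerSeries.X : K⟦X⟧) ^ m)
      = (-1) ^ k * (m.choose k : K) := by
  have hterm : ∀ i : ℕ, (-1 : K⟦X⟧) ^ (i + m) * 1 ^ i * PowerSeries.X ^ (m - i)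
        * ((m.choose i : ℕ) : K⟦X⟧)
      = PowerSeries.C (R := K) ((-1) ^ (i + m) * (m.choose i : K)) * PowerSeries.X ^ (m - i) := by
    intro i
    rw [map_mul, map_pow, map_neg, map_one, map_natCast]
    ring
  rw [sub_pow]
  simp only [hterm]
  rw [map_sum]
  rw [Finset.sum_eq_single (m - k)]
  · rw [PowerSeries.coeff_C_mul, PowerSeries.coeff_X_pow,
      if_pos (by omega : k = m - (m - k)), mul_one]
    rw [show m - k + m = k + 2 * (m - k) by omega, pow_add, pow_mul, neg_one_sq, one_pow,
      mul_one, Nat.choose_symm hkm]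
  · intro i hi hne
    rw [PowerSeries.coeff_C_mul, PowerSeries.coeff_X_pow,
      if_neg (by rw [Finset.mem_range] at hi; omega), mul_zero]
  · intro h
    exact absurd (Finset.mem_range.mpr (by omega)) h

theorem stmt_9 (K : Type*) [Field K] (p e n k r : ℕ) [Fact p.Prime] [CharP K p]
    (he : 1 ≤ e) (hn : 3 ≤ n) (hk : 1 ≤ k) (hq : p ^ e = n * k + 1) (hr : r ≤ k) :
    ((((n - 1) * k + r).choose k : K)) = (-1) ^ k * ((2 * k - r).choose k : K) := by
  obtain ⟨n', rfl⟩ : ∃ n', n = n' + 1 := ⟨n - 1, by omega⟩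
  have hn' : 2 ≤ n' := by omega
  simp only [Nat.add_sub_cancel] at *
  -- notation
  set m := n' * k + r with hm
  set a := k - r with ha
  have hsum : m + (a + 1) = p ^ e := by
    have : (n' + 1) * k = n' * k + k := by ring
    omega
  have hnk : k ≤ n' * k := Nat.le_mul_of_pos_left k (by omega)
  have hkq : k < p ^ e := by omega
  have hkm : k ≤ m := by omega
  haveI : CharP (PowerSeries K) p :=
    charP_of_injective_ringHom (f := PowerSeries.C (R := K))
      (fun x y h => by simpa using congrArg (PowerSeries.constantCoeff (R := K)) h) p
  -- Frobenius
  have hfrob : (1 - PowerSeries.X : PowerSeries K) ^ (p ^ e)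
      = 1 - PowerSeries.X ^ (p ^ e) := by
    simpa using sub_pow_char_pow (1 : PowerSeries K) PowerSeries.X (p := p) (n := e)
  -- main power series identity
  have hmain : (1 - PowerSeries.X : PowerSeries K) ^ m
      = (1 - PowerSeries.X ^ (p ^ e)) * (PowerSeries.invOneSubPow K (a + 1)).val := by
    have hu : (PowerSeries.invOneSubPow K (a + 1)).inv
        * (PowerSeries.invOneSubPow K (a + 1)).val = 1 :=
      (PowerSeries.invOneSubPow K (a + 1)).inv_val
    calc (1 - PowerSeries.X : PowerSeries K) ^ m
        = (1 - PowerSeries.X) ^ m * ((PowerSeries.invOneSubPow K (a + 1)).inv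
            * (PowerSeries.invOneSubPow K (a + 1)).val) := by rw [hu, mul_one]
      _ = ((1 - PowerSeries.X) ^ m * (1 - PowerSeries.X) ^ (a + 1))
            * (PowerSeries.invOneSubPow K (a + 1)).val := by
          rw [PowerSeries.invOneSubPow_inv_eq_one_sub_pow]; ring
      _ = (1 - PowerSeries.X ^ (p ^ e)) * (PowerSeries.invOneSubPow K (a + 1)).val := by
          rw [← pow_add, hsum, hfrob]
  -- take coefficient k
  have hco := congrArg (PowerSeries.coeff (R := K) k) hmain
  rw [coeff_one_sub_X_pow_aux K m k hkm] at hco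
  rw [PowerSeries.invOneSubPow_val_succ_eq_mk_add_choose] at hco
  rw [sub_mul, one_mul, map_sub, PowerSeries.coeff_mk] at hco
  have hzero : (PowerSeries.coeff (R := K) k)
      (PowerSeries.X ^ (p ^ e) * PowerSeries.mk fun n => ((a + n).choose a : K)) = 0 := by
    rw [PowerSeries.coeff_mul]
    apply Finset.sum_eq_zero
    intro x hx
    rw [Finset.HasAntidiagonal.mem_antidiagonal] at hx
    rw [PowerSeries.coeff_X_pow, if_neg (by omega), zero_mul]
  rw [hzero, sub_zero] at hco
  -- conclude
  have h1 : (a + k).choose a = (2 * k - r).choose k := by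
    rw [show a + k = 2 * k - r by omega, show a = 2 * k - r - k by omega]
    exact Nat.choose_symm (by omega)
  rw [h1] at hco
  rw [← hco, ← mul_assoc, ← pow_add, show k + k = 2 * k by ring, pow_mul, neg_one_sq,
    one_pow, one_mul]
end

section
/- Let p be a prime with p = nk+1 for integers n ≥ 3, k ≥ 1. Then the (k+1)×(k+1) matrix over F_p whose (i,j) entry is the binomial coefficient C((n-1)k, k-i+j) mod p (for 0 ≤ i,j ≤ k) has determinant equal to 1 in F_p. -/
/-!
Write `m = (n - 1) * k`, so that `p = m + k + 1` and `m ≡ -(k + 1) (mod p)`. Every entry index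
`r = k + j - i` satisfies `r ≤ 2 * k ≤ m < p`, so comparing falling factorials gives
`C(m, r) ≡ (-1) ^ r * C(k + r, k) (mod p)`. The signs `(-1) ^ (k + j - i)` split into a row and a
column factor whose products cancel, and the remaining matrix `(C(2k + j - i, k))` is, by
Vandermonde's identity, the product `U * L * U'` of the unitriangular matrices
`U = (C(k - i, k - t))`, `L = (C(k, k + s - t))` and `U' = (C(j, s))`.
-/

open Finset Matrix Polynomial

theorem Nat.cast_descFactorial_eq_neg_one_pow_mul {R : Type*} [CommRing R] {m k : ℕ}
    (h : (m : R) = -(k + 1)) (r : ℕ) :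
    (m.descFactorial r : R) = (-1) ^ r * ((k + r).descFactorial r : R) := by
  have hasc := ascPochhammer_eval_neg_eq_descPochhammer (R := R) (-((k + 1 : ℕ) : R)) r
  rw [neg_neg, ascPochhammer_nat_eq_natCast_descFactorial, Nat.add_right_comm,
    Nat.add_sub_cancel] at hasc
  rw [← descPochhammer_eval_eq_descFactorial, h, hasc, ← mul_assoc, ← mul_pow]
  simp

theorem ZMod.natCast_choose_eq_neg_one_pow_mul {p m k r : ℕ} [Fact p.Prime]
    (hp : p = m + k + 1) (hr : r ≤ m) :
    (m.choose r : ZMod p) = (-1) ^ r * ((k + r).choose k : ZMod p) := by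
  have hfac : (r.factorial : ZMod p) ≠ 0 := by
    rw [Ne, ZMod.natCast_eq_zero_iff, (Fact.out : p.Prime).dvd_factorial]
    omega
  have hm : (m : ZMod p) = -(k + 1) := by
    rw [eq_neg_iff_add_eq_zero]
    exact_mod_cast (ZMod.natCast_eq_zero_iff _ _).2 (by rw [hp, add_assoc])
  apply mul_left_cancel₀ hfac
  rw [Nat.choose_symm_add, mul_left_comm, ← Nat.cast_mul, ← Nat.cast_mul,
    ← Nat.descFactorial_eq_factorial_mul_choose, ← Nat.descFactorial_eq_factorial_mul_choose]
  exact Nat.cast_descFactorial_eq_neg_one_pow_mul hm r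

theorem Nat.sum_range_choose_add_sub_mul_choose {a b t : ℕ} (ht : t ≤ a) :
    ∑ s ∈ range (a + 1), a.choose (a + s - t) * b.choose s = (a + b).choose t := by
  have hvanish : ∀ s ∈ range (a + 1), s ∉ range (t + 1) →
      a.choose (a + s - t) * b.choose s = 0 := by
    intro s _ hs
    rw [mem_range] at hs
    rw [Nat.choose_eq_zero_of_lt (by omega), zero_mul]
  rw [← sum_subset (range_subset_range.2 (by omega)) hvanish, Nat.add_choose_eq,
    ← Nat.sum_antidiagonal_swap]
  simp only [Prod.fst_swap, Prod.snd_swap]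
  rw [Nat.sum_antidiagonal_eq_sum_range_succ (fun i j => a.choose j * b.choose i)]
  refine sum_congr rfl fun s hs => ?_
  rw [mem_range] at hs
  rw [← Nat.choose_symm (by omega), show a - (a + s - t) = t - s by omega]

section

variable {R : Type*} [CommRing R]

theorem Matrix.of_choose_add_sub_mul_of_choose (k : ℕ) :
    (of fun t s : Fin (k + 1) => (k.choose (k + s - t) : R)) *
        of (fun s j : Fin (k + 1) => ((j : ℕ).choose s : R)) =
      of fun t j : Fin (k + 1) => ((k + j).choose t : R) := by
  ext t j
  rw [mul_apply]
  simp only [of_apply]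
  rw [← Nat.sum_range_choose_add_sub_mul_choose t.is_le, Nat.cast_sum]
  simp only [Nat.cast_mul]
  exact Fin.sum_univ_eq_sum_range (fun s => (k.choose (k + s - t) * (j : ℕ).choose s : R)) (k + 1)

theorem Matrix.of_choose_sub_sub_mul_of_choose_add (k : ℕ) :
    (of fun i t : Fin (k + 1) => ((k - i).choose (k - t) : R)) *
        of (fun t j : Fin (k + 1) => ((k + j).choose t : R)) =
      of fun i j : Fin (k + 1) => ((k + (k + j - i)).choose k : R) := by
  ext i j
  rw [mul_apply]
  simp only [of_apply]
  rw [show k + (k + j - i) = (k - i) + (k + j) by omega, Nat.add_choose_eq,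
    ← Nat.sum_antidiagonal_swap]
  simp only [Prod.fst_swap, Prod.snd_swap]
  rw [Nat.sum_antidiagonal_eq_sum_range_succ (fun s u => (k - i).choose u * (k + j).choose s),
    Nat.cast_sum]
  simp only [Nat.cast_mul]
  exact Fin.sum_univ_eq_sum_range
    (fun t => ((k - i).choose (k - t) * (k + j).choose t : R)) (k + 1)

theorem Matrix.det_of_choose_add_add_sub (k : ℕ) :
    (of fun i j : Fin (k + 1) => ((k + (k + j - i)).choose k : R)).det = 1 := by
  rw [← of_choose_sub_sub_mul_of_choose_add, ← of_choose_add_sub_mul_of_choose, det_mul, det_mul,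
    det_of_isUpperTriangular, det_of_isLowerTriangular, det_of_isUpperTriangular]
  · simp
  · intro s j (hjs : j < s)
    rw [of_apply, Nat.choose_eq_zero_of_lt hjs, Nat.cast_zero]
  · intro t s (hts : t < s)
    rw [of_apply, Nat.choose_eq_zero_of_lt (by omega), Nat.cast_zero]
  · intro i t (hti : t < i)
    rw [of_apply, Nat.choose_eq_zero_of_lt (by omega), Nat.cast_zero]

theorem Matrix.det_of_neg_one_pow_add_sub_mul {k : ℕ}
    (M : Matrix (Fin (k + 1)) (Fin (k + 1)) R) :
    (of fun i j : Fin (k + 1) => (-1) ^ (k + (j : ℕ) - (i : ℕ)) * M i j).det = M.det := by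
  set N := of fun i j : Fin (k + 1) => (-1 : R) ^ (k - (i : ℕ)) * M i j
  have hsplit : (of fun i j : Fin (k + 1) => (-1 : R) ^ (k + (j : ℕ) - (i : ℕ)) * M i j) =
      of fun i j : Fin (k + 1) => (-1) ^ (j : ℕ) * N i j := by
    ext i j
    simp only [N, of_apply]
    rw [← mul_assoc, ← pow_add]
    congr 2
    omega
  have hrev : ∏ i : Fin (k + 1), (-1 : R) ^ (k - (i : ℕ)) = ∏ i : Fin (k + 1), (-1) ^ (i : ℕ) :=
    Fintype.prod_equiv Fin.revPerm _ _ fun i => by simp [Fin.val_rev]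
  rw [hsplit, det_mul_row, det_mul_column, hrev, ← mul_assoc, ← prod_mul_distrib]
  simp [← pow_add]

end

theorem stmt_10_general (p n k : ℕ) [Fact p.Prime] (hn : 3 ≤ n)
    (hp : p = n * k + 1) :
    (Matrix.of fun i j : Fin (k + 1) =>
        ((((n - 1) * k).choose (k + (j : ℕ) - (i : ℕ)) : ZMod p))).det = 1 := by
  have hpk : p = (n - 1) * k + k + 1 := by
    rw [hp, ← Nat.add_one_mul, Nat.sub_add_cancel (by omega)]
  have h2k : 2 * k ≤ (n - 1) * k := Nat.mul_le_mul_right k (by omega)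
  have hentries : (of fun i j : Fin (k + 1) =>
      ((((n - 1) * k).choose (k + (j : ℕ) - (i : ℕ)) : ZMod p))) =
      of fun i j : Fin (k + 1) =>
        (-1) ^ (k + (j : ℕ) - (i : ℕ)) * ((k + (k + j - i)).choose k : ZMod p) := by
    ext i j
    exact ZMod.natCast_choose_eq_neg_one_pow_mul hpk (by omega)
  rw [hentries]
  exact (det_of_neg_one_pow_add_sub_mul _).trans (det_of_choose_add_add_sub k)

theorem stmt_10 (p n k : ℕ) [Fact p.Prime] (hn : 3 ≤ n) (hk : 1 ≤ k)
    (hp : p = n * k + 1) :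
    (Matrix.of fun i j : Fin (k + 1) =>
        ((((n - 1) * k).choose (k + (j : ℕ) - (i : ℕ)) : ZMod p))).det = 1 :=
  stmt_10_general p n k hn hp
end

section
/- Let p = nk+δ be a prime with n ≥ 4, k ≥ 1, and 2 ≤ δ ≤ n-1. Then the rational number ∏_{t=0}^{k} C((n-1)k+1+t, k+1) / ∏_{t=0}^{k} C(k+1+t, k+1) is nonzero modulo p; equivalently, the (k+1)×(k+1) matrix over F_p with (i,j) entry C((n-1)k+1, k+1-i+j) mod p is invertible. -/
/-!
Every binomial coefficient in the quotient has top entry at most `n k + 1 < p`, hence is a unit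
mod `p`. For the determinant put `d = k + δ - 2`, so that `(n - 1) k + 1 ≡ -(d + 1) (mod p)`.
Upper negation gives `C((n-1)k+1, r) ≡ (-1)^r C(d + r, d)` for `r < p`, and the signs factor out
of the rows and columns, leaving the Toeplitz matrix `E i j = C(d + k + 1 + j - i, d)`.
A kernel vector `v` of `E` gives the polynomial `G = ∑ v_j (X + j)(X + j - 1)⋯(X + j - d + 1)`
of degree `≤ d`. It vanishes at `0, …, d - k - 1` (every falling factorial is 0) and, by the kernel
equations, at `d + 1, …, d + k + 1`; these are `d + 1` distinct points mod `p`, so `G = 0`.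
Evaluating `G` at `d - i` for the largest `i` with `v i ≠ 0` then leaves `v i · d! = 0`.
-/

open Finset Polynomial Matrix
open scoped Nat

lemma Nat.natCast_injOn_Iic_of_isUnit_factorial {R : Type*} [CommRing R] [Nontrivial R] {N : ℕ}
    (hN : IsUnit (N ! : R)) : (Set.Iic N).InjOn (Nat.cast : ℕ → R) := by
  intro a ha b hb hab
  wlog hle : a ≤ b generalizing a b
  · exact (this hb ha hab.symm (by omega)).symm
  by_contra hne
  have hdvd : b - a ∣ N ! := Nat.dvd_factorial (by omega) (by simp at hb; omega)
  have hzero : ((b - a : ℕ) : R) = 0 := by rw [Nat.cast_sub hle, hab, sub_self]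
  have hunit := isUnit_of_dvd_unit (Nat.cast_dvd_cast (α := R) hdvd) hN
  rw [hzero] at hunit
  exact not_isUnit_zero hunit

lemma Nat.isUnit_natCast_choose {R : Type*} [CommSemiring R] {m r : ℕ} (hr : r ≤ m)
    (hm : IsUnit (m ! : R)) : IsUnit (m.choose r : R) := by
  rw [← Nat.choose_mul_factorial_mul_factorial hr, Nat.cast_mul, Nat.cast_mul] at hm
  exact isUnit_of_mul_isUnit_left (isUnit_of_mul_isUnit_left hm)

section UpperNegation

variable {R : Type*} [CommRing R] {N d : ℕ}

lemma Nat.natCast_descFactorial_of_natCast_eq_neg (hN : (N : R) = -((d + 1 : ℕ) : R)) (r : ℕ) :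
    (N.descFactorial r : R) = (-1) ^ r * ((d + r).descFactorial r : R) := by
  rw [← descPochhammer_eval_eq_descFactorial, descPochhammer_eval_eq_ascPochhammer, hN,
    ← descPochhammer_eval_eq_descFactorial, ← ascPochhammer_eval_neg_eq_descPochhammer]
  congr 1
  push_cast
  ring

lemma Nat.natCast_choose_of_natCast_eq_neg (hN : (N : R) = -((d + 1 : ℕ) : R)) {r : ℕ}
    (hr : IsUnit (r ! : R)) : (N.choose r : R) = (-1) ^ r * ((d + r).choose d : R) := by
  apply hr.mul_left_cancel
  rw [← Nat.cast_mul, ← Nat.descFactorial_eq_factorial_mul_choose,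
    natCast_descFactorial_of_natCast_eq_neg hN, Nat.descFactorial_eq_factorial_mul_choose,
    Nat.choose_symm_add, Nat.cast_mul]
  ring

end UpperNegation

lemma Matrix.det_of_neg_one_pow_sub_mul_eq_zero_iff {R : Type*} [CommRing R] {n a : ℕ}
    (hna : n ≤ a + 1) (E : Matrix (Fin n) (Fin n) R) :
    (Matrix.of fun i j : Fin n => (-1) ^ (a + j - i) * E i j).det = 0 ↔ E.det = 0 := by
  have hsplit : (Matrix.of fun i j : Fin n => (-1) ^ (a + j - i) * E i j) =
      Matrix.of fun i j : Fin n => (-1 : R) ^ (i : ℕ) *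
        (Matrix.of fun i' j' : Fin n => (-1) ^ (a + j') * E i' j') i j := by
    ext i j
    have hpar : (i : ℕ) + (a + j) = (a + j - i) + 2 * i := by omega
    simp only [Matrix.of_apply]
    rw [← mul_assoc, ← pow_add, hpar, pow_add, pow_mul, neg_one_sq, one_pow, mul_one]
  have hunit (f : Fin n → ℕ) : IsUnit (∏ i, (-1 : R) ^ f i) := by
    rw [prod_pow_eq_pow_sum]
    exact isUnit_one.neg.pow _
  rw [hsplit, Matrix.det_mul_column, Matrix.det_mul_row, (hunit _).mul_right_eq_zero,
    (hunit _).mul_right_eq_zero]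

section ShiftedDescPochhammer

variable {R : Type*} [CommRing R] {n : ℕ}

noncomputable def shiftedDescPochhammerSum (d : ℕ) (v : Fin n → R) : R[X] :=
  ∑ j, C (v j) * (descPochhammer R d).comp (X + C ((j : ℕ) : R))

lemma shiftedDescPochhammerSum_eval_natCast (d : ℕ) (v : Fin n → R) (m : ℕ) :
    (shiftedDescPochhammerSum d v).eval (m : R) = ∑ j, v j * ((m + j).descFactorial d : R) := by
  simp only [shiftedDescPochhammerSum, eval_finsetSum, eval_mul, eval_C, eval_comp, eval_add,
    eval_X, ← Nat.cast_add, descPochhammer_eval_eq_descFactorial]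

lemma natDegree_shiftedDescPochhammerSum_le [IsDomain R] (d : ℕ) (v : Fin n → R) :
    (shiftedDescPochhammerSum d v).natDegree ≤ d := by
  refine natDegree_sum_le_of_forall_le _ _ fun j _ => (natDegree_C_mul_le _ _).trans ?_
  refine natDegree_comp_le.trans ?_
  rw [descPochhammer_natDegree, natDegree_X_add_C, mul_one]

lemma eq_zero_of_shiftedDescPochhammerSum_eq_zero {d : ℕ} (hnd : n ≤ d + 1)
    (hd : IsUnit (d ! : R)) {v : Fin n → R} (hv : shiftedDescPochhammerSum d v = 0) : v = 0 := by
  classical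
  by_contra hne
  obtain ⟨i, hi, hmax⟩ : ∃ i, v i ≠ 0 ∧ ∀ j, i < j → v j = 0 := by
    have hS : (univ.filter fun j => v j ≠ 0).Nonempty := by
      obtain ⟨j, hj⟩ := Function.ne_iff.mp hne
      exact ⟨j, by simpa using hj⟩
    refine ⟨_, (mem_filter.mp (max'_mem _ hS)).2, fun j hj => ?_⟩
    by_contra hvj
    exact (le_max' _ j (by simpa using hvj)).not_gt hj
  have heval := shiftedDescPochhammerSum_eval_natCast d v (d - i)
  rw [hv, eval_zero, sum_eq_single i] at heval
  · rw [show d - i + i = d by omega, Nat.descFactorial_self] at heval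
    exact hi ((hd.mul_left_eq_zero).mp heval.symm)
  · intro j _ hji
    rcases lt_or_gt_of_ne hji with hlt | hgt
    · rw [Nat.descFactorial_of_lt (by omega), Nat.cast_zero, mul_zero]
    · rw [hmax j hgt, zero_mul]
  · simp

variable (R) in
def chooseToeplitz (d k : ℕ) : Matrix (Fin (k + 1)) (Fin (k + 1)) R :=
  Matrix.of fun i j => ((d + (k + 1 + j - i)).choose d : R)

lemma shiftedDescPochhammerSum_eval_natCast_sub {d k : ℕ} (v : Fin (k + 1) → R) (i : Fin (k + 1)) :
    (shiftedDescPochhammerSum d v).eval ((d + k + 1 - i : ℕ) : R) =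
      d ! * (chooseToeplitz R d k *ᵥ v) i := by
  rw [shiftedDescPochhammerSum_eval_natCast, Matrix.mulVec, dotProduct, mul_sum]
  refine sum_congr rfl fun j _ => ?_
  rw [show d + k + 1 - i + j = d + (k + 1 + j - i) by omega,
    Nat.descFactorial_eq_factorial_mul_choose, chooseToeplitz, Matrix.of_apply]
  push_cast
  ring

theorem det_chooseToeplitz_ne_zero [IsDomain R] {d k : ℕ} (hkd : k ≤ d)
    (hN : IsUnit ((d + k + 1)! : R)) : (chooseToeplitz R d k).det ≠ 0 := by
  classical
  intro hdet
  obtain ⟨v, hv, hker⟩ := Matrix.exists_mulVec_eq_zero_iff.mpr hdet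
  refine hv (eq_zero_of_shiftedDescPochhammerSum_eq_zero (by omega : k + 1 ≤ d + 1)
    (hN.natCast_factorial_of_le (by omega)) ?_)
  set T := range (d - k) ∪ Icc (d + 1) (d + k + 1)
  have hroot : ∀ m ∈ T, (shiftedDescPochhammerSum d v).eval (m : R) = 0 := by
    intro m hm
    rcases mem_union.mp hm with hsmall | hlarge
    · rw [shiftedDescPochhammerSum_eval_natCast]
      refine sum_eq_zero fun j _ => ?_
      rw [Nat.descFactorial_of_lt (by simp at hsmall; omega), Nat.cast_zero, mul_zero]
    · obtain ⟨hlo, hhi⟩ := mem_Icc.mp hlarge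
      have := shiftedDescPochhammerSum_eval_natCast_sub (d := d) v ⟨d + k + 1 - m, by omega⟩
      rwa [show d + k + 1 - (d + k + 1 - m) = m by omega, hker, Pi.zero_apply, mul_zero] at this
  have hcard : #T = d + 1 := by
    rw [card_union_of_disjoint (disjoint_left.mpr fun a ha hb => by simp at ha hb; omega),
      card_range, Nat.card_Icc]
    omega
  have hinj : Set.InjOn (Nat.cast : ℕ → R) T :=
    (Nat.natCast_injOn_Iic_of_isUnit_factorial hN).mono fun m hm => by simp [T] at hm ⊢; omega
  refine eq_zero_of_natDegree_lt_card_of_eval_eq_zero' _ (T.image Nat.cast) ?_ ?_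
  · simpa using hroot
  · rw [card_image_of_injOn hinj, hcard]
    exact Nat.lt_succ_of_le (natDegree_shiftedDescPochhammerSum_le d v)

end ShiftedDescPochhammer

theorem stmt_11_general (p n k δ : ℕ) [Fact p.Prime] (hn : 4 ≤ n)
    (hδ : 2 ≤ δ) (hp : p = n * k + δ) :
    (∏ t ∈ Finset.range (k + 1), (((n - 1) * k + 1 + t).choose (k + 1) : ZMod p)) /
        (∏ t ∈ Finset.range (k + 1), ((k + 1 + t).choose (k + 1) : ZMod p)) ≠ 0 ∧
      (Matrix.of fun i j : Fin (k + 1) =>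
          ((((n - 1) * k + 1).choose (k + 1 + (j : ℕ) - (i : ℕ)) : ZMod p))).det ≠ 0 := by
  have hunit (m : ℕ) (hm : m < p) : IsUnit (m ! : ZMod p) :=
    (IsUnit.natCast_factorial_iff_of_charP p).mpr hm
  have hnk : (n - 1) * k + k = n * k := by
    rw [← Nat.succ_mul, Nat.succ_eq_add_one, Nat.sub_add_cancel (by omega)]
  have hkn : k ≤ (n - 1) * k := Nat.le_mul_of_pos_left k (by omega)
  have hchoose (m r : ℕ) (hr : r ≤ m) (hm : m < p) : (m.choose r : ZMod p) ≠ 0 :=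
    (Nat.isUnit_natCast_choose hr (hunit m hm)).ne_zero
  refine ⟨div_ne_zero ?_ ?_, ?_⟩
  · exact prod_ne_zero_iff.mpr fun t ht =>
      have := mem_range.mp ht; hchoose _ _ (by omega) (by omega)
  · exact prod_ne_zero_iff.mpr fun t ht =>
      have := mem_range.mp ht; hchoose _ _ (by omega) (by omega)
  · have hN : (((n - 1) * k + 1 : ℕ) : ZMod p) = -((k + δ - 2 + 1 : ℕ) : ZMod p) := by
      rw [eq_neg_iff_add_eq_zero, ← Nat.cast_add, ZMod.natCast_eq_zero_iff]
      exact ⟨1, by omega⟩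
    have hM : (Matrix.of fun i j : Fin (k + 1) =>
          ((((n - 1) * k + 1).choose (k + 1 + (j : ℕ) - (i : ℕ)) : ZMod p))) =
        Matrix.of fun i j : Fin (k + 1) =>
          (-1) ^ (k + 1 + (j : ℕ) - (i : ℕ)) * chooseToeplitz (ZMod p) (k + δ - 2) k i j := by
      ext i j
      exact Nat.natCast_choose_of_natCast_eq_neg hN (hunit _ (by omega))
    rw [hM, Ne, Matrix.det_of_neg_one_pow_sub_mul_eq_zero_iff (Nat.le_succ _)]
    exact det_chooseToeplitz_ne_zero (by omega) (hunit _ (by omega))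

theorem stmt_11 (p n k δ : ℕ) [Fact p.Prime] (hn : 4 ≤ n) (hk : 1 ≤ k)
    (hδ : 2 ≤ δ) (hδn : δ ≤ n - 1) (hp : p = n * k + δ) :
    (∏ t ∈ Finset.range (k + 1), (((n - 1) * k + 1 + t).choose (k + 1) : ZMod p)) /
        (∏ t ∈ Finset.range (k + 1), ((k + 1 + t).choose (k + 1) : ZMod p)) ≠ 0 ∧
      (Matrix.of fun i j : Fin (k + 1) =>
          ((((n - 1) * k + 1).choose (k + 1 + (j : ℕ) - (i : ℕ)) : ZMod p))).det ≠ 0 :=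
  stmt_11_general p n k δ hn hδ hp
end

section
/- Let R = K[X,Y,Z]/(X^3+Y^3+Z^3) where K is a field of characteristic p ≡ 2 mod 3. Then (xyz)^p ∈ (x^{2p}, y^{2p}, z^{2p}) in R (for p = 2, one has (xyz)^8 ∈ (x^{16}, y^{16}, z^{16})); consequently xyz lies in the Frobenius closure of (x^2, y^2, z^2). -/
namespace Stmt12Aux

open Polynomial Finset

/-! ### Number theory: `p = 3k+2` prime divides `∑_{i≤k} C(2k+1,i)²`. -/

lemma key_dvd (p k : ℕ) (hp : p.Prime) (hpk : p = 3 * k + 2) (hk : 1 ≤ k) :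
    p ∣ ∑ i ∈ range (k + 1), (2 * k + 1).choose i * (2 * k + 1).choose i := by
  set S := ∑ i ∈ range (k + 1), (2 * k + 1).choose i * (2 * k + 1).choose i with hS
  -- Vandermonde: full sum of squares is a central binomial coefficient
  have hvan : ((2 * k + 1) + (2 * k + 1)).choose (2 * k + 1)
      = ∑ i ∈ range (2 * k + 2), (2 * k + 1).choose i * (2 * k + 1).choose (2 * k + 1 - i) := by
    rw [Nat.add_choose_eq, Finset.Nat.sum_antidiagonal_eq_sum_range_succ_mk]
  have hsymm : ∀ i ∈ range (2 * k + 2),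
      (2 * k + 1).choose i * (2 * k + 1).choose (2 * k + 1 - i)
        = (2 * k + 1).choose i * (2 * k + 1).choose i := by
    intro i hi
    rw [mem_range] at hi
    rw [Nat.choose_symm (by omega)]
  rw [Finset.sum_congr rfl hsymm] at hvan
  -- split the full sum into two equal halves
  have hsplit : ∑ i ∈ range (2 * k + 2), (2 * k + 1).choose i * (2 * k + 1).choose i
      = S + S := by
    have h1 : range (2 * k + 2) = Finset.Ico 0 (2 * k + 2) := by
      rw [Finset.range_eq_Ico]
    rw [h1, ← Finset.sum_Ico_consecutive _ (Nat.zero_le (k + 1)) (by omega : k + 1 ≤ 2 * k + 2)]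
    congr 1
    · rw [← Finset.range_eq_Ico]
    · rw [Finset.sum_Ico_eq_sum_range]
      have h2 : 2 * k + 2 - (k + 1) = k + 1 := by omega
      rw [h2]
      have h3 : ∀ i ∈ range (k + 1),
          (2 * k + 1).choose (k + 1 + i) * (2 * k + 1).choose (k + 1 + i)
            = (2 * k + 1).choose (k - i) * (2 * k + 1).choose (k - i) := by
        intro i hi
        rw [mem_range] at hi
        have : (2 * k + 1).choose (k + 1 + i) = (2 * k + 1).choose (k - i) := by
          rw [← Nat.choose_symm (by omega : k + 1 + i ≤ 2 * k + 1)]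
          congr 1
          omega
        rw [this]
      rw [Finset.sum_congr rfl h3]
      rw [hS]
      rw [← Finset.sum_range_reflect (fun i => (2 * k + 1).choose i * (2 * k + 1).choose i) (k + 1)]
      apply Finset.sum_congr rfl
      intro i hi
      rw [mem_range] at hi
      congr 2 <;> omega
  have hdvd : p ∣ ((2 * k + 1) + (2 * k + 1)).choose (2 * k + 1) := by
    have h4 : (2 * k + 1) + (2 * k + 1) = p + k := by omega
    rw [h4]
    exact Nat.Prime.dvd_choose hp (by omega) (by omega) (by omega)
  rw [hvan, hsplit] at hdvd
  have h2S : S + S = 2 * S := by ring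
  rw [h2S] at hdvd
  rcases (Nat.Prime.dvd_mul hp).mp hdvd with h | h
  · exfalso
    have := Nat.le_of_dvd (by norm_num) h
    omega
  · exact h

/-! ### The core one-variable polynomial identity over `ZMod p`. -/

lemma core (p k : ℕ) [Fact p.Prime] (hpk : p = 3 * k + 2) (hk : 1 ≤ k) :
    ∃ q β α : Polynomial (ZMod p),
      q.natDegree < k ∧ β.natDegree < k ∧ α.natDegree < k ∧
      (X : (ZMod p)[X]) ^ k * (X + 1) ^ k
        = q * (X + 1) ^ (2 * k + 1) + β - X ^ (2 * k + 1) * α := by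
  set L0 : (ZMod p)[X] := ∑ i ∈ range (k + 1), C (((2 * k + 1).choose i : ZMod p)) * X ^ i
    with hL0
  set L1 : (ZMod p)[X] :=
      ∑ i ∈ range (k + 1), C (((2 * k + 1).choose (k + 1 + i) : ZMod p)) * X ^ i with hL1
  -- (B1): binomial split
  have hB1 : ((X : (ZMod p)[X]) + 1) ^ (2 * k + 1) = L0 + X ^ (k + 1) * L1 := by
    have hexp : ((X : (ZMod p)[X]) + 1) ^ (2 * k + 1)
        = ∑ i ∈ range (2 * k + 2), C (((2 * k + 1).choose i : ZMod p)) * X ^ i := by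
      rw [add_pow]
      apply Finset.sum_congr rfl
      intro i hi
      rw [map_natCast (C : ZMod p →+* (ZMod p)[X]), one_pow, mul_one, mul_comm]
    rw [hexp]
    rw [Finset.range_eq_Ico,
      ← Finset.sum_Ico_consecutive _ (Nat.zero_le (k + 1)) (by omega : k + 1 ≤ 2 * k + 2),
      ← Finset.range_eq_Ico]
    congr 1
    rw [Finset.sum_Ico_eq_sum_range]
    have h2 : 2 * k + 2 - (k + 1) = k + 1 := by omega
    rw [h2, Finset.mul_sum]
    apply Finset.sum_congr rfl
    intro i hi
    rw [pow_add]
    ring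
  -- (F): Frobenius
  have hF : ((X : (ZMod p)[X]) + 1) ^ (3 * k + 2) = X ^ (3 * k + 2) + 1 := by
    have h := add_pow_char (X : (ZMod p)[X]) 1 p
    rw [one_pow] at h
    rw [← hpk]
    exact h
  -- degree bounds for L0 L1
  have hdegL0 : L0.natDegree ≤ k := by
    apply Polynomial.natDegree_sum_le_of_forall_le
    intro i hi
    rw [mem_range] at hi
    exact le_trans (Polynomial.natDegree_C_mul_le _ _)
      (by simpa using Nat.le_of_lt_succ hi)
  have hdegL1 : L1.natDegree ≤ k := by
    apply Polynomial.natDegree_sum_le_of_forall_le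
    intro i hi
    rw [mem_range] at hi
    exact le_trans (Polynomial.natDegree_C_mul_le _ _)
      (by simpa using Nat.le_of_lt_succ hi)
  -- divisibility producing A₁
  have hM1 : (X : (ZMod p)[X]) ^ (k + 1) * (X ^ (2 * k + 1) * L0 - L1)
      = (X + 1) ^ (k + 1) * ((X + 1) ^ (2 * k + 1) * L0 - (X + 1) ^ k) := by
    linear_combination (-L0) * hF + hB1
  have hcop : IsCoprime (((X : (ZMod p)[X]) + 1) ^ (k + 1)) ((X : (ZMod p)[X]) ^ (k + 1)) := by
    have hbase : IsCoprime ((X : (ZMod p)[X]) + 1) (X : (ZMod p)[X]) := ⟨1, -1, by ring⟩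
    exact hbase.pow
  have hdvd : ((X : (ZMod p)[X]) + 1) ^ (k + 1) ∣ (X ^ (2 * k + 1) * L0 - L1) := by
    apply hcop.dvd_of_dvd_mul_left
    exact ⟨(X + 1) ^ (2 * k + 1) * L0 - (X + 1) ^ k, hM1⟩
  obtain ⟨A1, hA1⟩ := hdvd
  -- degree bound for A1
  have hXone_ne : ((X : (ZMod p)[X]) + 1) ≠ 0 := by
    have hm : ((X : (ZMod p)[X]) + 1).Monic := by
      simpa using Polynomial.monic_X_add_C (1 : ZMod p)
    exact hm.ne_zero
  have hdegX1 : (((X : (ZMod p)[X]) + 1) ^ (k + 1)).natDegree = k + 1 := by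
    rw [Polynomial.natDegree_pow]
    have : ((X : (ZMod p)[X]) + 1).natDegree = 1 := by
      have : ((X : (ZMod p)[X]) + 1) = X + C 1 := by rw [Polynomial.C_1]
      rw [this, Polynomial.natDegree_X_add_C]
    rw [this, mul_one]
  have hdegA1 : A1.natDegree ≤ 2 * k := by
    by_cases hA1z : A1 = 0
    · simp [hA1z]
    have h1 : ((X : (ZMod p)[X]) ^ (2 * k + 1) * L0 - L1).natDegree ≤ 3 * k + 1 := by
      apply le_trans (Polynomial.natDegree_sub_le _ _)
      apply max_le
      · apply le_trans (Polynomial.natDegree_mul_le)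
        simp only [Polynomial.natDegree_X_pow]
        omega
      · omega
    rw [hA1] at h1
    rw [Polynomial.natDegree_mul (pow_ne_zero _ hXone_ne) hA1z, hdegX1] at h1
    omega
  -- middle coefficient of A1 vanishes
  have hA1id : A1 + X ^ (3 * k + 2) * A1
      = (X + 1) ^ (2 * k + 1) * ((X : (ZMod p)[X]) ^ (2 * k + 1) * L0 - L1) := by
    linear_combination (-A1) * hF - ((X + 1) ^ (2 * k + 1)) * hA1
  have hL1coeff : ∀ j, j ≤ k → L1.coeff j = (((2 * k + 1).choose (k + 1 + j) : ZMod p)) := by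
    intro j hj
    rw [hL1, Polynomial.finset_sum_coeff]
    have : ∀ i ∈ range (k + 1),
        (C (((2 * k + 1).choose (k + 1 + i) : ZMod p)) * X ^ i).coeff j
          = if j = i then (((2 * k + 1).choose (k + 1 + i) : ZMod p)) else 0 := by
      intro i hi
      rw [Polynomial.coeff_C_mul, Polynomial.coeff_X_pow, mul_ite, mul_one, mul_zero]
    rw [Finset.sum_congr rfl this, Finset.sum_ite_eq (range (k + 1)) j]
    simp [Nat.lt_succ_of_le hj]
  have hcoeffk : A1.coeff k = 0 := by
    have hlhs := congrArg (fun P => Polynomial.coeff P k) hA1id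
    rw [Polynomial.coeff_add] at hlhs
    rw [mul_comm ((X : (ZMod p)[X]) ^ (3 * k + 2)) A1, Polynomial.coeff_mul_X_pow'] at hlhs
    rw [if_neg (by omega)] at hlhs
    rw [add_zero] at hlhs
    rw [mul_sub] at hlhs
    rw [Polynomial.coeff_sub] at hlhs
    have hterm1 : ((X + 1) ^ (2 * k + 1) * ((X : (ZMod p)[X]) ^ (2 * k + 1) * L0)).coeff k
        = 0 := by
      rw [show (X + 1) ^ (2 * k + 1) * ((X : (ZMod p)[X]) ^ (2 * k + 1) * L0)
          = ((X + 1) ^ (2 * k + 1) * L0) * X ^ (2 * k + 1) by ring]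
      rw [Polynomial.coeff_mul_X_pow', if_neg (by omega)]
    rw [hterm1, zero_sub] at hlhs
    -- compute the convolution coefficient
    have hconv : (((X : (ZMod p)[X]) + 1) ^ (2 * k + 1) * L1).coeff k
        = ((∑ i ∈ range (k + 1), (2 * k + 1).choose i * (2 * k + 1).choose i : ℕ) : ZMod p) := by
      rw [Polynomial.coeff_mul, Finset.Nat.sum_antidiagonal_eq_sum_range_succ_mk]
      push_cast
      apply Finset.sum_congr rfl
      intro i hi
      rw [mem_range] at hi
      have h1 : (2 * k + 1).choose (k + 1 + (k - i)) = (2 * k + 1).choose i := by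
        rw [← Nat.choose_symm (by omega : k + 1 + (k - i) ≤ 2 * k + 1)]
        congr 1
        omega
      rw [Polynomial.coeff_X_add_one_pow, hL1coeff (k - i) (by omega), h1]
    rw [hconv] at hlhs
    have hzero : ((∑ i ∈ range (k + 1),
        (2 * k + 1).choose i * (2 * k + 1).choose i : ℕ) : ZMod p) = 0 := by
      rw [ZMod.natCast_eq_zero_iff]
      exact key_dvd p k (Fact.out) hpk hk
    rw [hzero, neg_zero] at hlhs
    exact hlhs
  -- split A1 = α + X^(k+1) β
  set α : (ZMod p)[X] := A1 %ₘ X ^ (k + 1) with hα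
  set β : (ZMod p)[X] := A1 /ₘ X ^ (k + 1) with hβ
  have hmon : Polynomial.Monic ((X : (ZMod p)[X]) ^ (k + 1)) := Polynomial.monic_X_pow _
  have hsplit : α + X ^ (k + 1) * β = A1 := Polynomial.modByMonic_add_div A1 _
  have hdegα' : α.natDegree ≤ k := by
    by_cases hz : α = 0
    · simp [hz]
    have h := Polynomial.degree_modByMonic_lt A1 hmon
    rw [Polynomial.degree_X_pow] at h
    exact Nat.lt_succ_iff.mp ((Polynomial.natDegree_lt_iff_degree_lt hz).mpr h)
  have hcα : α.coeff k = 0 := by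
    have := congrArg (fun P => Polynomial.coeff P k) hsplit
    rw [Polynomial.coeff_add, mul_comm, Polynomial.coeff_mul_X_pow', if_neg (by omega)] at this
    rw [add_zero] at this
    rw [this, hcoeffk]
  have hdegα : α.natDegree < k := by
    by_cases hz : α = 0
    · simp [hz]; omega
    rcases Nat.lt_or_ge α.natDegree k with h | h
    · exact h
    · exfalso
      have heq : α.natDegree = k := le_antisymm hdegα' h
      have := Polynomial.leadingCoeff_ne_zero.mpr hz
      rw [Polynomial.leadingCoeff, heq, hcα] at this
      exact this rfl
  have hdegβ : β.natDegree < k := by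
    by_cases hz : β = 0
    · simp [hz]; omega
    by_contra hge
    push_neg at hge
    have h1 : ((X : (ZMod p)[X]) ^ (k + 1) * β).natDegree = k + 1 + β.natDegree := by
      rw [Polynomial.natDegree_mul (by exact pow_ne_zero _ Polynomial.X_ne_zero) hz]
      simp
    have h2 : α.natDegree < ((X : (ZMod p)[X]) ^ (k + 1) * β).natDegree := by
      rw [h1]; omega
    have h3 : (α + (X : (ZMod p)[X]) ^ (k + 1) * β).natDegree
        = ((X : (ZMod p)[X]) ^ (k + 1) * β).natDegree := by
      rw [add_comm]
      exact Polynomial.natDegree_add_eq_left_of_natDegree_lt h2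
    rw [hsplit, h1] at h3
    omega
  -- define q and prove its key identity
  set q : (ZMod p)[X] := X ^ k * L0 - (X + 1) ^ (k + 1) * β with hq
  have hq_id : (X : (ZMod p)[X]) ^ (k + 1) * q = L1 + (X + 1) ^ (k + 1) * α := by
    linear_combination hA1 - ((X + 1) ^ (k + 1)) * hsplit
  have hdegq : q.natDegree < k := by
    by_cases hz : q = 0
    · simp [hz]; omega
    have h1 : ((X : (ZMod p)[X]) ^ (k + 1) * q).natDegree = k + 1 + q.natDegree := by
      rw [Polynomial.natDegree_mul (by exact pow_ne_zero _ Polynomial.X_ne_zero) hz]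
      simp
    have h2 : (L1 + (X + 1) ^ (k + 1) * α).natDegree ≤ 2 * k := by
      apply le_trans (Polynomial.natDegree_add_le _ _)
      apply max_le (by omega)
      apply le_trans (Polynomial.natDegree_mul_le)
      rw [hdegX1]
      omega
    rw [hq_id] at h1
    omega
  refine ⟨q, β, α, hdegq, hdegβ, hdegα, ?_⟩
  -- final identity, after multiplying by X^(k+1)(X+1)^(k+1)
  have hXl_ne : ((X : (ZMod p)[X]) ^ (k + 1) * (X + 1) ^ (k + 1)) ≠ 0 :=
    mul_ne_zero (pow_ne_zero _ Polynomial.X_ne_zero) (pow_ne_zero _ hXone_ne)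
  apply mul_left_cancel₀ hXl_ne
  linear_combination (X ^ (2 * k + 1) : (ZMod p)[X]) * hB1 - (X + 1) ^ (3 * k + 2) * hq_id
    - (L1 + (X + 1) ^ (k + 1) * α) * hF + hA1 - (X + 1) ^ (k + 1) * hsplit

/-! ### Homogenized evaluation of one-variable polynomials. -/

section Hev

variable {p : ℕ} {R : Type*} [CommRing R] (φ : ZMod p →+* R) (u v : R)

noncomputable def hev (P : Polynomial (ZMod p)) (d : ℕ) : R :=
  ∑ j ∈ Finset.range (d + 1), φ (P.coeff j) * (u ^ (d - j) * v ^ j)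

lemma hev_add (P Q : Polynomial (ZMod p)) (d : ℕ) :
    hev φ u v (P + Q) d = hev φ u v P d + hev φ u v Q d := by
  simp [hev, add_mul, Finset.sum_add_distrib]

lemma hev_sub (P Q : Polynomial (ZMod p)) (d : ℕ) :
    hev φ u v (P - Q) d = hev φ u v P d - hev φ u v Q d := by
  simp [hev, sub_mul, Finset.sum_sub_distrib]

lemma hev_one : hev φ u v 1 0 = 1 := by
  simp [hev]

lemma hev_step (P : Polynomial (ZMod p)) (d : ℕ) (h : P.natDegree ≤ d) :
    hev φ u v P (d + 1) = u * hev φ u v P d := by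
  rw [hev, Finset.sum_range_succ]
  rw [Polynomial.coeff_eq_zero_of_natDegree_lt (by omega)]
  rw [map_zero, zero_mul, add_zero, hev, Finset.mul_sum]
  apply Finset.sum_congr rfl
  intro j hj
  rw [Finset.mem_range] at hj
  have : d + 1 - j = (d - j) + 1 := by omega
  rw [this, pow_succ]
  ring

lemma hev_shift (P : Polynomial (ZMod p)) (d n : ℕ) (h : P.natDegree ≤ d) :
    hev φ u v P (d + n) = u ^ n * hev φ u v P d := by
  induction n with
  | zero => simp
  | succ m ih =>
      have : d + (m + 1) = (d + m) + 1 := by omega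
      rw [this, hev_step φ u v P (d + m) (by omega), ih, pow_succ]
      ring

lemma hev_mul_X (P : Polynomial (ZMod p)) (d : ℕ) :
    hev φ u v (P * Polynomial.X) (d + 1) = hev φ u v P d * v := by
  rw [hev, Finset.sum_range_succ']
  have h0 : (P * Polynomial.X).coeff 0 = 0 := by
    rw [Polynomial.mul_coeff_zero, Polynomial.coeff_X_zero, mul_zero]
  rw [h0, map_zero, zero_mul, add_zero, hev, Finset.sum_mul]
  apply Finset.sum_congr rfl
  intro j hj
  rw [Finset.mem_range] at hj
  rw [Polynomial.coeff_mul_X]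
  have : d + 1 - (j + 1) = d - j := by omega
  rw [this, pow_succ]
  ring

lemma hev_mul_X_pow (P : Polynomial (ZMod p)) (d n : ℕ) :
    hev φ u v (P * Polynomial.X ^ n) (d + n) = hev φ u v P d * v ^ n := by
  induction n with
  | zero => simp
  | succ m ih =>
      have h1 : P * Polynomial.X ^ (m + 1) = (P * Polynomial.X ^ m) * Polynomial.X := by ring
      have h2 : d + (m + 1) = (d + m) + 1 := by omega
      rw [h1, h2, hev_mul_X, ih, pow_succ]
      ring

lemma hev_mul_l (P : Polynomial (ZMod p)) (d : ℕ) (h : P.natDegree ≤ d) :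
    hev φ u v (P * (Polynomial.X + 1)) (d + 1) = hev φ u v P d * (u + v) := by
  have h1 : P * (Polynomial.X + 1) = P * Polynomial.X + P := by ring
  rw [h1, hev_add, hev_mul_X, hev_step φ u v P d h]
  ring

lemma hev_mul_l_pow (P : Polynomial (ZMod p)) (d n : ℕ) (h : P.natDegree ≤ d) :
    hev φ u v (P * (Polynomial.X + 1) ^ n) (d + n) = hev φ u v P d * (u + v) ^ n := by
  induction n with
  | zero => simp
  | succ m ih =>
      have h1 : P * (Polynomial.X + 1) ^ (m + 1)
          = (P * (Polynomial.X + 1) ^ m) * (Polynomial.X + 1) := by ring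
      have h2 : d + (m + 1) = (d + m) + 1 := by omega
      have h3 : (P * (Polynomial.X + 1) ^ m).natDegree ≤ d + m := by
        apply le_trans Polynomial.natDegree_mul_le
        have h4 : ((Polynomial.X + 1 : Polynomial (ZMod p)) ^ m).natDegree ≤ m := by
          apply le_trans (Polynomial.natDegree_pow_le)
          have : (Polynomial.X + 1 : Polynomial (ZMod p)).natDegree ≤ 1 := by
            apply le_trans (Polynomial.natDegree_add_le _ _)
            simp [Polynomial.natDegree_X_le (R := ZMod p), Polynomial.natDegree_one]
          nlinarith
        omega
      rw [h1, h2, hev_mul_l φ u v _ _ h3, ih, pow_succ]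
      ring

lemma hev_X_pow_l_pow (n m : ℕ) :
    hev φ u v (Polynomial.X ^ n * (Polynomial.X + 1) ^ m) (n + m) = v ^ n * (u + v) ^ m := by
  have h1 : (Polynomial.X : Polynomial (ZMod p)) ^ n * (Polynomial.X + 1) ^ m
      = ((1 * Polynomial.X ^ n) * (Polynomial.X + 1) ^ m) := by ring
  have h2 : ((1 : Polynomial (ZMod p)) * Polynomial.X ^ n).natDegree ≤ 0 + n := by
    apply le_trans Polynomial.natDegree_mul_le
    simpa using Polynomial.natDegree_X_pow_le (R := ZMod p) n
  have h3 := hev_mul_l_pow φ u v (1 * Polynomial.X ^ n) (0 + n) m h2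
  rw [hev_mul_X_pow φ u v 1 0 n, hev_one] at h3
  rw [h1]
  have h4 : n + m = 0 + n + m := by omega
  rw [h4, h3]
  ring

end Hev

/-! ### The main membership lemma for odd p. -/

lemma main_mem {p : ℕ} [Fact p.Prime] {R : Type*} [CommRing R] [CharP R p]
    (x y z : R) (h3 : x ^ 3 + y ^ 3 + z ^ 3 = 0) (hp2 : 2 < p) (hp3 : p % 3 = 2) :
    (x * y * z) ^ p ∈ Ideal.span {x ^ (2 * p), y ^ (2 * p), z ^ (2 * p)} := by
  obtain ⟨k, hpk⟩ : ∃ k, p = 3 * k + 2 := ⟨p / 3, by omega⟩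
  have hk : 1 ≤ k := by
    rcases Nat.eq_zero_or_pos k with h | h
    · omega
    · exact h
  have hpodd : Odd p := (Fact.out : p.Prime).odd_of_ne_two (by omega)
  have hkodd : Odd k := by
    rw [Nat.odd_iff] at hpodd ⊢
    omega
  obtain ⟨q, β, α, hq, hβ, hα, hid⟩ := core p k hpk hk
  set φ : ZMod p →+* R := ZMod.castHom (dvd_refl p) R with hφ
  set u : R := x ^ 3 with hu
  set v : R := y ^ 3 with hv
  set w : R := z ^ 3 with hw
  set Hq : R := hev φ u v q (k - 1) with hHq
  set Hβ : R := hev φ u v β (k - 1) with hHβ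
  set Hα : R := hev φ u v α (k - 1) with hHα
  -- transport the core identity
  have hE := congrArg (fun P => hev φ u v P (3 * k)) hid
  have hlhs : hev φ u v ((Polynomial.X : Polynomial (ZMod p)) ^ k
      * (Polynomial.X + 1) ^ k) (3 * k) = u ^ k * (v ^ k * (u + v) ^ k) := by
    have hd : ((Polynomial.X : Polynomial (ZMod p)) ^ k
        * (Polynomial.X + 1) ^ k).natDegree ≤ k + k := by
      apply le_trans Polynomial.natDegree_mul_le
      have h4 : ((Polynomial.X + 1 : Polynomial (ZMod p)) ^ k).natDegree ≤ k := by
        apply le_trans (Polynomial.natDegree_pow_le)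
        have : (Polynomial.X + 1 : Polynomial (ZMod p)).natDegree ≤ 1 := by
          apply le_trans (Polynomial.natDegree_add_le _ _)
          simp [Polynomial.natDegree_X_le (R := ZMod p), Polynomial.natDegree_one]
        nlinarith
      simp only [Polynomial.natDegree_X_pow]
      omega
    have h5 : 3 * k = (k + k) + k := by omega
    rw [h5, hev_shift φ u v _ _ k hd, hev_X_pow_l_pow]
  have hrhs : hev φ u v (q * (Polynomial.X + 1) ^ (2 * k + 1) + β
      - Polynomial.X ^ (2 * k + 1) * α) (3 * k)
      = Hq * (u + v) ^ (2 * k + 1) + u ^ (2 * k + 1) * Hβ - Hα * v ^ (2 * k + 1) := by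
    rw [hev_sub, hev_add]
    have e1 : 3 * k = (k - 1) + (2 * k + 1) := by omega
    congr 1
    · congr 1
      · rw [e1, hev_mul_l_pow φ u v q (k - 1) (2 * k + 1) (by omega)]
      · rw [e1, hev_shift φ u v β (k - 1) (2 * k + 1) (by omega)]
    · rw [show (Polynomial.X : Polynomial (ZMod p)) ^ (2 * k + 1) * α
        = α * Polynomial.X ^ (2 * k + 1) by ring]
      rw [e1, hev_mul_X_pow φ u v α (k - 1) (2 * k + 1)]
  rw [hlhs, hrhs] at hE
  -- now pure commutative algebra in R
  have huvw : u + v = -w := by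
    rw [hu, hv, hw]
    linear_combination h3
  have hodd1 : Odd (2 * k + 1) := ⟨k, by omega⟩
  have hneg1 : (u + v) ^ k = -(w ^ k) := by rw [huvw, Odd.neg_pow hkodd]
  have hneg2 : (u + v) ^ (2 * k + 1) = -(w ^ (2 * k + 1)) := by
    rw [huvw, Odd.neg_pow hodd1]
  have hkey : u ^ k * v ^ k * w ^ k
      = Hq * w ^ (2 * k + 1) - u ^ (2 * k + 1) * Hβ + Hα * v ^ (2 * k + 1) := by
    rw [hneg1, hneg2] at hE
    linear_combination -hE
  have hmain : (x * y * z) ^ p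
      = x ^ (2 * p) * (-(x * (y ^ 2 * z ^ 2 * Hβ)))
        + y ^ (2 * p) * (y * (x ^ 2 * z ^ 2 * Hα))
        + z ^ (2 * p) * (z * (x ^ 2 * y ^ 2 * Hq)) := by
    rw [hpk]
    rw [show 2 * (3 * k + 2) = 6 * k + 4 by omega]
    rw [hu, hv, hw] at hkey
    linear_combination (x ^ 2 * y ^ 2 * z ^ 2) * hkey
  rw [hmain]
  apply Ideal.add_mem
  apply Ideal.add_mem
  · exact Ideal.mul_mem_right _ _ (Ideal.subset_span (by simp))
  · exact Ideal.mul_mem_right _ _ (Ideal.subset_span (by simp))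
  · exact Ideal.mul_mem_right _ _ (Ideal.subset_span (by simp))

end Stmt12Aux

open MvPolynomial

theorem stmt_12 (K : Type*) [Field K] (p : ℕ) [Fact p.Prime] [CharP K p]
    (hp : p % 3 = 2)
    (R : Type*) [CommRing R]
    (f : MvPolynomial (Fin 3) K →+* R) (hf : Function.Surjective f)
    (hker : RingHom.ker f = Ideal.span {X 0 ^ 3 + X 1 ^ 3 + X 2 ^ 3})
    (x y z : R) (hx : x = f (X 0)) (hy : y = f (X 1)) (hz : z = f (X 2)) :
    (2 < p → (x * y * z) ^ p ∈ Ideal.span {x ^ (2 * p), y ^ (2 * p), z ^ (2 * p)}) ∧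
      (p = 2 → (x * y * z) ^ 8 ∈ Ideal.span {x ^ 16, y ^ 16, z ^ 16}) ∧
      ∃ e : ℕ, (x * y * z) ^ p ^ e ∈
        Ideal.span {x ^ (2 * p ^ e), y ^ (2 * p ^ e), z ^ (2 * p ^ e)} := by
  have hg : x ^ 3 + y ^ 3 + z ^ 3 = 0 := by
    rw [hx, hy, hz]
    have hmem : (X 0 ^ 3 + X 1 ^ 3 + X 2 ^ 3 : MvPolynomial (Fin 3) K) ∈ RingHom.ker f := by
      rw [hker]; exact Ideal.subset_span rfl
    have h0 := RingHom.mem_ker.mp hmem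
    simpa [map_add, map_pow] using h0
  have hpR : (p : R) = 0 := by
    have h1 : ((p : ℕ) : MvPolynomial (Fin 3) K) = 0 :=
      CharP.cast_eq_zero (MvPolynomial (Fin 3) K) p
    calc (p : R) = f ((p : ℕ) : MvPolynomial (Fin 3) K) := (map_natCast f p).symm
      _ = 0 := by rw [h1, map_zero]
  haveI hCharR : CharP R p := by
    constructor
    intro n
    constructor
    · intro hn
      have h2 : f ((n : ℕ) : MvPolynomial (Fin 3) K) = 0 := by rw [map_natCast]; exact hn
      have h3 : ((n : ℕ) : MvPolynomial (Fin 3) K) ∈ RingHom.ker f :=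
        RingHom.mem_ker.mpr h2
      rw [hker, Ideal.mem_span_singleton] at h3
      obtain ⟨c, hc⟩ := h3
      have h4 := congrArg constantCoeff hc
      rw [map_natCast, map_mul] at h4
      have h5 : constantCoeff (X 0 ^ 3 + X 1 ^ 3 + X 2 ^ 3 : MvPolynomial (Fin 3) K) = 0 := by
        simp
      rw [h5, zero_mul] at h4
      exact (CharP.cast_eq_zero_iff K p n).mp h4
    · intro hn
      obtain ⟨m, hm⟩ := hn
      rw [hm]
      push_cast
      rw [hpR, zero_mul]
  by_cases hp2 : p = 2
  · subst hp2
    have h2R : (2 : R) = 0 := by exact_mod_cast hpR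
    have hid : (x * y * z) ^ 8
        = x ^ 16 * (x ^ 4 * y ^ 2 * z ^ 2) + y ^ 16 * (x ^ 2 * y ^ 4 * z ^ 2)
          + z ^ 16 * (x ^ 2 * y ^ 2 * z ^ 4) := by
      linear_combination
        (-(x ^ 2 * y ^ 2 * z ^ 2) * ((x ^ 3 + y ^ 3 + z ^ 3)
            * (x ^ 6 + y ^ 6 + z ^ 6 - x ^ 3 * y ^ 3 - y ^ 3 * z ^ 3 - x ^ 3 * z ^ 3) ^ 2
          + 6 * (x ^ 6 + y ^ 6 + z ^ 6 - x ^ 3 * y ^ 3 - y ^ 3 * z ^ 3 - x ^ 3 * z ^ 3)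
            * (x ^ 3 * y ^ 3 * z ^ 3))) * hg
        + (-(x ^ 2 * y ^ 2 * z ^ 2) * (4 * (x ^ 3 * y ^ 3 * z ^ 3) ^ 2
            - (x ^ 9 * y ^ 9 + y ^ 9 * z ^ 9 + x ^ 9 * z ^ 9))) * h2R
    have hmem8 : (x * y * z) ^ 8 ∈ Ideal.span {x ^ 16, y ^ 16, z ^ 16} := by
      rw [hid]
      apply Ideal.add_mem
      apply Ideal.add_mem
      · exact Ideal.mul_mem_right _ _ (Ideal.subset_span (by simp))
      · exact Ideal.mul_mem_right _ _ (Ideal.subset_span (by simp))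
      · exact Ideal.mul_mem_right _ _ (Ideal.subset_span (by simp))
    refine ⟨fun h => absurd h (by norm_num), fun _ => hmem8, 3, ?_⟩
    norm_num
    exact hmem8
  · have hp2' : 2 < p := lt_of_le_of_ne (Fact.out : p.Prime).two_le (Ne.symm hp2)
    have hmain := Stmt12Aux.main_mem x y z hg hp2' hp
    refine ⟨fun _ => hmain, fun h => absurd h hp2, 1, ?_⟩
    simpa [pow_one] using hmain
end

section
/- Let K be a field of prime characteristic p with 2 ≤ p ≤ n-1 for some n ≥ 4, and let R = K[X_1,...,X_n]/(X_1^n+⋯+X_n^n). Then (x_1⋯x_n)^{(n-2)p} ∈ (x_1^{(n-1)p}, ..., x_n^{(n-1)p}) in R; hence (x_1⋯x_n)^{n-2} lies in the Frobenius closure of (x_1^{n-1},...,x_n^{n-1}). -/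
open MvPolynomial

/- Split `x i₀ ^ m` off `(∏ i, x i) ^ d` and replace it by `-∑_{j ≠ i₀} x j ^ m`: the `j`-th term of
the result is divisible by `x j ^ (d + m)`. -/
theorem prod_pow_mem_span_pow_of_sum_pow_eq_zero {ι R : Type*} [Fintype ι] [DecidableEq ι]
    [Nonempty ι] [CommRing R] {x : ι → R} {m d c : ℕ} (hsum : ∑ i, x i ^ m = 0)
    (hmd : m ≤ d) (hc : c ≤ d + m) :
    (∏ i, x i) ^ d ∈ Ideal.span (Set.range fun i => x i ^ c) := by
  obtain ⟨i₀⟩ := ‹Nonempty ι›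
  set z := x i₀ ^ (d - m) * ∏ i ∈ Finset.univ.erase i₀, x i ^ d
  have hsplit : (∏ i, x i) ^ d = z * x i₀ ^ m := by
    rw [← Finset.prod_pow, ← Finset.mul_prod_erase _ _ (Finset.mem_univ i₀),
      ← pow_sub_mul_pow (x i₀) hmd]
    ring
  have hrel : x i₀ ^ m = -∑ j ∈ Finset.univ.erase i₀, x j ^ m := by
    rw [← Finset.add_sum_erase _ _ (Finset.mem_univ i₀)] at hsum
    exact eq_neg_of_add_eq_zero_left hsum
  have hdvd : ∀ j ∈ Finset.univ.erase i₀, x j ^ c ∣ z * x j ^ m := fun j hj =>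
    calc x j ^ c ∣ x j ^ d * x j ^ m := pow_add (x j) d m ▸ pow_dvd_pow _ hc
      _ ∣ z * x j ^ m :=
        mul_dvd_mul_right (Dvd.dvd.mul_left (Finset.dvd_prod_of_mem (x · ^ d) hj) _) _
  rw [hsplit, hrel, mul_neg, Finset.mul_sum]
  exact neg_mem <| Ideal.sum_mem _ fun j hj =>
    Ideal.mem_of_dvd _ (hdvd j hj) (Ideal.subset_span ⟨j, rfl⟩)

theorem stmt_13_general (K : Type*) [Field K] (p n : ℕ)
    (hn : 4 ≤ n) (hp : 2 ≤ p) (hpn : p ≤ n - 1)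
    (R : Type*) [CommRing R]
    (f : MvPolynomial (Fin n) K →+* R)
    (hker : RingHom.ker f = Ideal.span {∑ i : Fin n, X i ^ n})
    (x : Fin n → R) (hx : ∀ i, x i = f (X i)) :
    (∏ i, x i) ^ ((n - 2) * p) ∈
        Ideal.span (Set.range fun i : Fin n => x i ^ ((n - 1) * p)) ∧
      ∃ e : ℕ, ((∏ i, x i) ^ (n - 2)) ^ p ^ e ∈
        Ideal.span (Set.range fun i : Fin n => (x i ^ (n - 1)) ^ p ^ e) := by
  have : Nonempty (Fin n) := ⟨⟨0, by omega⟩⟩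
  have hsum : ∑ i, x i ^ n = 0 := by
    have hmem : ∑ i : Fin n, X i ^ n ∈ RingHom.ker f := hker ▸ Ideal.subset_span rfl
    simpa [hx] using hmem
  have hmd : n ≤ (n - 2) * p :=
    calc n ≤ (n - 2) * 2 := by omega
      _ ≤ (n - 2) * p := Nat.mul_le_mul_left _ hp
  have hc : (n - 1) * p ≤ (n - 2) * p + n := by
    rw [show n - 1 = n - 2 + 1 by omega, add_one_mul]
    omega
  have key := prod_pow_mem_span_pow_of_sum_pow_eq_zero hsum hmd hc
  exact ⟨key, 1, by simpa only [pow_one, ← pow_mul] using key⟩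

theorem stmt_13 (K : Type*) [Field K] (p n : ℕ) [Fact p.Prime] [CharP K p]
    (hn : 4 ≤ n) (hp : 2 ≤ p) (hpn : p ≤ n - 1)
    (R : Type*) [CommRing R]
    (f : MvPolynomial (Fin n) K →+* R) (hf : Function.Surjective f)
    (hker : RingHom.ker f = Ideal.span {∑ i : Fin n, X i ^ n})
    (x : Fin n → R) (hx : ∀ i, x i = f (X i)) :
    (∏ i, x i) ^ ((n - 2) * p) ∈
        Ideal.span (Set.range fun i : Fin n => x i ^ ((n - 1) * p)) ∧
      ∃ e : ℕ, ((∏ i, x i) ^ (n - 2)) ^ p ^ e ∈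
        Ideal.span (Set.range fun i : Fin n => (x i ^ (n - 1)) ^ p ^ e) :=
  stmt_13_general K p n hn hp hpn R f hker x hx
end
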